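/- arXiv:math/0607277 — 5 statements merged into one kernel-verified Lean document; each statement's English description precedes it below -/
import Mathlib

section
/- Let F be a field with char(F) ≠ 2 and let A be an F-algebra with involution *. If I is a nil ideal of A stable under * (i.e. I* ⊆ I), and the symmetric units of A satisfy a group identity w = 1, then the symmetric units of the quotient algebra A/I (with the induced involution) also satisfy the group identity w = 1. -/
set_option maxHeartbeats 1000000

/-- A set `S` of elements of a group `H` satisfies the group identity `w = 1`
(for `w` a word in the free group on `n` letters). -/
def SatisfiesGroupIdentity {n : ℕ} {H : Type*} [Group H]
    (w : FreeGroup (Fin n)) (S : Set H) : Prop :=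
  ∀ f : Fin n → H, (∀ i, f i ∈ S) → FreeGroup.lift f w = 1

section aux
variable {A : Type*} [Ring A] (I : TwoSidedIdeal A)

lemma mk'_surj : Function.Surjective I.ringCon.mk' := fun x => Quot.exists_rep x

lemma mk'_eq_iff (a b : A) : I.ringCon.mk' a = I.ringCon.mk' b ↔ a - b ∈ I := by
  rw [show (I.ringCon.mk' a = I.ringCon.mk' b) ↔ ((a : I.ringCon.Quotient) = b) from Iff.rfl,
    I.ringCon.eq, I.rel_iff]

lemma lift_isUnit (hnil : ∀ x ∈ I, IsNilpotent x) (x : A)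
    (hx : IsUnit (I.ringCon.mk' x)) : IsUnit x := by
  obtain ⟨u, hu⟩ := hx
  obtain ⟨v, hv⟩ := mk'_surj I (↑u⁻¹ : I.ringCon.Quotient)
  have h1 : x * v - 1 ∈ I := by
    rw [← mk'_eq_iff, map_mul, map_one, ← hu, hv, u.mul_inv]
  have h2 : v * x - 1 ∈ I := by
    rw [← mk'_eq_iff, map_mul, map_one, ← hu, hv, u.inv_mul]
  have u1 : IsUnit (x * v) := by
    have := (hnil _ h1).isUnit_add_one
    simpa using this
  have u2 : IsUnit (v * x) := by
    have := (hnil _ h2).isUnit_add_one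
    simpa using this
  obtain ⟨w1, hw1⟩ := u1
  obtain ⟨w2, hw2⟩ := u2
  have hr : x * (v * ↑w1⁻¹) = 1 := by rw [← mul_assoc, ← hw1, w1.mul_inv]
  have hl : (↑w2⁻¹ * v) * x = 1 := by rw [mul_assoc, ← hw2, w2.inv_mul]
  refine isUnit_iff_exists.2 ⟨v * ↑w1⁻¹, hr, ?_⟩
  have key : (↑w2⁻¹ * v : A) = v * ↑w1⁻¹ := by
    calc (↑w2⁻¹ * v : A) = (↑w2⁻¹ * v) * (x * (v * ↑w1⁻¹)) := by rw [hr, mul_one]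
      _ = ((↑w2⁻¹ * v) * x) * (v * ↑w1⁻¹) := by noncomm_ring
      _ = v * ↑w1⁻¹ := by rw [hl, one_mul]
  rw [← key, hl]

end aux


/-- If `I` is a `*`-stable nil (two-sided) ideal of an algebra `A` with
involution over a field of characteristic `≠ 2`, and the symmetric units of `A` satisfy the
group identity `w = 1`, then the symmetric units of `A ⧸ I` (with the induced involution)
satisfy `w = 1`. -/
theorem stmt_0 {F A : Type*} [Field F] [Ring A] [Algebra F A]
    (hchar : (2 : F) ≠ 0)
    (σ : A →ₗ[F] A) (hσmul : ∀ x y : A, σ (x * y) = σ y * σ x)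
    (hσinv : ∀ x : A, σ (σ x) = x)
    (I : TwoSidedIdeal A) (hnil : ∀ x ∈ I, IsNilpotent x) (hstable : ∀ x ∈ I, σ x ∈ I)
    (σ' : I.ringCon.Quotient → I.ringCon.Quotient)
    (hσ' : ∀ a : A, σ' (I.ringCon.mk' a) = I.ringCon.mk' (σ a))
    {n : ℕ} (w : FreeGroup (Fin n)) (hw : w ≠ 1)
    (hA : SatisfiesGroupIdentity w {u : Aˣ | σ (u : A) = (u : A)}) :
    SatisfiesGroupIdentity w
      {u : (I.ringCon.Quotient)ˣ | σ' (u : I.ringCon.Quotient) = (u : I.ringCon.Quotient)} := by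
  intro f hf
  have key : ∀ i : Fin n, ∃ g : Aˣ, σ (g : A) = (g : A) ∧
      Units.map (I.ringCon.mk' : A →+* I.ringCon.Quotient).toMonoidHom g = f i := by
    intro i
    obtain ⟨a, ha⟩ := mk'_surj I ((f i : I.ringCon.Quotient))
    have hmk : I.ringCon.mk' (σ a) = I.ringCon.mk' a := by
      rw [← hσ' a, ha]; exact hf i
    have hsym : σ a - a ∈ I := (mk'_eq_iff I _ _).mp hmk
    set b : A := (2 : F)⁻¹ • (a + σ a) with hb
    have h2 : (2 : F)⁻¹ • a + (2 : F)⁻¹ • a = a := by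
      rw [← add_smul, ← two_mul, mul_inv_cancel₀ hchar, one_smul]
    have hba : b - a ∈ I := by
      have heq : b - a = (2 : F)⁻¹ • (σ a - a) :=
        calc (2:F)⁻¹ • (a + σ a) - a
            = ((2:F)⁻¹ • a + (2:F)⁻¹ • σ a) - ((2:F)⁻¹ • a + (2:F)⁻¹ • a) := by
              rw [smul_add, h2]
          _ = (2:F)⁻¹ • σ a - (2:F)⁻¹ • a := by abel
          _ = (2:F)⁻¹ • (σ a - a) := (smul_sub _ _ _).symm
      rw [heq, Algebra.smul_def]
      exact I.mul_mem_left _ _ hsym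
    have hmkb : I.ringCon.mk' b = (f i : I.ringCon.Quotient) := by
      rw [← ha]; exact (mk'_eq_iff I _ _).mpr hba
    have hbu : IsUnit b := by
      apply lift_isUnit I hnil
      rw [hmkb]; exact (f i).isUnit
    have hbsym : σ b = b := by
      rw [hb, map_smul, map_add, hσinv, add_comm]
    obtain ⟨u, hu⟩ := hbu
    refine ⟨u, by rw [hu, hbsym], ?_⟩
    ext
    simp only [Units.coe_map, MonoidHom.coe_coe]
    show I.ringCon.mk' (u : A) = (f i : I.ringCon.Quotient)
    rw [hu]; exact hmkb
  choose g hgsym hgmap using key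
  have hg1 : FreeGroup.lift g w = 1 := hA g fun i => hgsym i
  have heq : FreeGroup.lift f w =
      (Units.map (I.ringCon.mk' : A →+* I.ringCon.Quotient).toMonoidHom) (FreeGroup.lift g w) := by
    have hcomp : ((Units.map (I.ringCon.mk' : A →+* I.ringCon.Quotient).toMonoidHom).comp
        (FreeGroup.lift g) : FreeGroup (Fin n) →* _) = FreeGroup.lift f := by
      apply FreeGroup.ext_hom
      intro i
      simp only [MonoidHom.comp_apply, FreeGroup.lift_apply_of]
      exact hgmap i
    rw [← hcomp]; rfl
  rw [heq, hg1, map_one]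
end

section
/- Let R be a ring, z a unit of R, and h an element with h⁻¹zh = z⁻¹. Then for every odd positive integer n = p^l, one has ([z−1,(z⁻¹−1)h])^{p^l} = −z^{(−3p^l−1)/2} · (z+1)^{p^l} · (z−1)^{2p^l} · h^{p^l}, where [x,y] = xy − yx. -/
section aux
variable {R : Type*} [Ring R] (u v : R)

private lemma key1 (h1 : u*v = 1) (h2 : v*u = 1) :
    (u-1)*(v-1) - (v-1)*(v-1) = -(v^2*((u+1)*(u-1)^2)) := by
  have redv : ∀ x:R, v*(u*x) = x := fun x => by rw [← mul_assoc, h2, one_mul]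
  have redu : ∀ x:R, u*(v*x) = x := fun x => by rw [← mul_assoc, h1, one_mul]
  simp only [mul_sub, sub_mul, mul_add, add_mul, mul_one, one_mul, pow_succ, pow_zero,
    mul_assoc, redu, redv, h1, h2]
  abel

private lemma key2 (h1 : u*v = 1) (h2 : v*u = 1) :
    (v^2*((u+1)*(u-1)^2)) * (u^2*((v+1)*(v-1)^2)) = v^3*((u+1)^2*(u-1)^4) := by
  have redv : ∀ x:R, v*(u*x) = x := fun x => by rw [← mul_assoc, h2, one_mul]
  have redu : ∀ x:R, u*(v*x) = x := fun x => by rw [← mul_assoc, h1, one_mul]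
  simp only [mul_sub, sub_mul, mul_add, add_mul, mul_one, one_mul, pow_succ, pow_zero,
    mul_assoc, redu, redv, h1, h2]
  abel

private lemma key3 (h1 : u*v = 1) (h2 : v*u = 1) :
    (v^2*((u+1)*(u-1)^2)) * (u^2*((v+1)*(v-1)^2))
      = (u^2*((v+1)*(v-1)^2)) * (v^2*((u+1)*(u-1)^2)) := by
  have redv : ∀ x:R, v*(u*x) = x := fun x => by rw [← mul_assoc, h2, one_mul]
  have redu : ∀ x:R, u*(v*x) = x := fun x => by rw [← mul_assoc, h1, one_mul]
  simp only [mul_sub, sub_mul, mul_add, add_mul, mul_one, one_mul, pow_succ, pow_zero,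
    mul_assoc, redu, redv, h1, h2]
  abel

private lemma key4 (h1 : u*v = 1) (h2 : v*u = 1) (m : ℕ) :
    (v^3*((u+1)^2*(u-1)^4))^m * (v^2*((u+1)*(u-1)^2))
      = v^(3*m+2) * ((u+1)^(2*m+1) * (u-1)^(2*(2*m+1))) := by
  let T : Subring R := Subring.closure {u, v}
  letI : CommRing T := Subring.closureCommRingOfComm (by
    rintro x hx y hy
    simp only [Set.mem_insert_iff, Set.mem_singleton_iff] at hx hy
    rcases hx with rfl | rfl <;> rcases hy with rfl | rfl
    · rfl
    · rw [h1, h2]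
    · rw [h1, h2]
    · rfl)
  have hUm : u ∈ T := Subring.subset_closure (by simp)
  have hVm : v ∈ T := Subring.subset_closure (by simp)
  set U : T := ⟨u, hUm⟩
  set V : T := ⟨v, hVm⟩
  have key : (V^3*((U+1)^2*(U-1)^4))^m * (V^2*((U+1)*(U-1)^2))
      = V^(3*m+2) * ((U+1)^(2*m+1) * (U-1)^(2*(2*m+1))) := by
    rw [mul_pow, mul_pow, ← pow_mul, ← pow_mul, ← pow_mul]
    ring
  have := congrArg (Subtype.val) key
  push_cast at this
  exact this

end aux

/-- Let `z` be a unit of a ring `R` and `h ∈ R` with `z h = h z⁻¹`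
(the conjugation relation `h⁻¹ z h = z⁻¹`). Then for every odd positive integer
`n = p^l = 2*m + 1` one has
`([z−1,(z⁻¹−1)h])^n = −z^{−(3n+1)/2} (z+1)^n (z−1)^{2n} h^n`,
where `(3n+1)/2 = 3m+2` and `z^{−(3n+1)/2}` means `(z⁻¹)^(3m+2)`. -/
theorem stmt_2 {R : Type*} [Ring R] (z : Rˣ) (h : R)
    (hconj : (z : R) * h = h * (↑z⁻¹ : R))
    (p l n m : ℕ) (hn : n = p ^ l) (hodd : Odd n) (hm : n = 2 * m + 1) :
    (((z : R) - 1) * (((↑z⁻¹ : R) - 1) * h) - (((↑z⁻¹ : R) - 1) * h) * ((z : R) - 1)) ^ n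
      = -((↑z⁻¹ : R) ^ (3 * m + 2) * ((z : R) + 1) ^ n * ((z : R) - 1) ^ (2 * n) * h ^ n) := by
  set u : R := (z : R) with hu
  set v : R := (↑z⁻¹ : R) with hv
  have h1 : u * v = 1 := z.mul_inv
  have h2 : v * u = 1 := z.inv_mul
  -- basic conjugation moves
  have huv : h * v = u * h := hconj.symm
  have hvu : h * u = v * h := by
    calc h * u = (v * (u * h)) * u := by rw [← mul_assoc, h2, one_mul]
      _ = (v * (h * v)) * u := by rw [hconj]
      _ = (v * h) * (v * u) := by rw [← mul_assoc, mul_assoc (v*h) v u]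
      _ = v * h := by rw [h2, mul_one]
  -- the two "a"-elements
  set a : R := v^2*((u+1)*(u-1)^2) with ha
  set a' : R := u^2*((v+1)*(v-1)^2) with ha'
  -- conjugation of building blocks
  have p1 : h * (u+1) = (v+1) * h := by rw [mul_add, add_mul, mul_one, one_mul, hvu]
  have p2 : h * (u-1) = (v-1) * h := by rw [mul_sub, sub_mul, mul_one, one_mul, hvu]
  have p1' : h * (v+1) = (u+1) * h := by rw [mul_add, add_mul, mul_one, one_mul, huv]
  have p2' : h * (v-1) = (u-1) * h := by rw [mul_sub, sub_mul, mul_one, one_mul, huv]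
  have q2 : h * (u-1)^2 = (v-1)^2 * h := by
    rw [sq, sq, ← mul_assoc, p2, mul_assoc, p2, ← mul_assoc]
  have q2' : h * (v-1)^2 = (u-1)^2 * h := by
    rw [sq, sq, ← mul_assoc, p2', mul_assoc, p2', ← mul_assoc]
  have p3 : h * v^2 = u^2 * h := by
    rw [sq, sq, ← mul_assoc, huv, mul_assoc, huv, ← mul_assoc]
  have p3' : h * u^2 = v^2 * h := by
    rw [sq, sq, ← mul_assoc, hvu, mul_assoc, hvu, ← mul_assoc]
  have hcomA : h * a = a' * h := by
    rw [ha, ha', ← mul_assoc, p3, mul_assoc, ← mul_assoc h, p1, mul_assoc, q2,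
      ← mul_assoc, ← mul_assoc, mul_assoc (u^2)]
  have hcomA' : h * a' = a * h := by
    rw [ha, ha', ← mul_assoc, p3', mul_assoc, ← mul_assoc h, p1', mul_assoc, q2',
      ← mul_assoc, ← mul_assoc, mul_assoc (v^2)]
  have caa' : a * a' = a' * a := key3 u v h1 h2
  have hAA : h * (a*a') = (a*a') * h := by
    rw [← mul_assoc, hcomA, mul_assoc, hcomA', ← mul_assoc, ← caa']
  have chAA : Commute h (a*a') := hAA
  have ch2a : Commute (h*h) a := by
    unfold Commute SemiconjBy
    rw [mul_assoc, hcomA, ← mul_assoc, hcomA', mul_assoc]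
  have ch2AA : Commute (h*h) (a*a') := chAA.mul_left chAA
  -- the key induction
  have L : ∀ k : ℕ, (a*h)^(2*k+1) = (a*a')^k * (a * h^(2*k+1)) := by
    intro k
    induction k with
    | zero => simp
    | succ k ih =>
      have e2 : (a*h)^2 = (a*a')*(h*h) := by
        rw [sq, mul_assoc, ← mul_assoc h a h, hcomA, ← mul_assoc, ← mul_assoc, mul_assoc (a*a')]
      have step : (h*h) * ((a*a')^k * (a * h^(2*k+1)))
          = (a*a')^k * (a * h^(2*(k+1)+1)) := by
        rw [← mul_assoc, (ch2AA.pow_right k).eq, mul_assoc, ← mul_assoc (h*h) a, ch2a.eq,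
          mul_assoc a, show h*h = h^2 from (sq h).symm, ← pow_add,
          show 2+(2*k+1) = 2*(k+1)+1 by omega]
      calc (a*h)^(2*(k+1)+1) = (a*h)^2 * (a*h)^(2*k+1) := by rw [← pow_add]; congr 1; omega
        _ = ((a*a')*(h*h)) * ((a*a')^k * (a * h^(2*k+1))) := by rw [e2, ih]
        _ = (a*a') * ((a*a')^k * (a * h^(2*(k+1)+1))) := by rw [mul_assoc, step]
        _ = (a*a')^(k+1) * (a * h^(2*(k+1)+1)) := by rw [← mul_assoc, ← pow_succ']
  -- put the commutator in the form -(a*h)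
  have hc : (u - 1) * ((v - 1) * h) - ((v - 1) * h) * (u - 1) = -(a * h) := by
    rw [mul_assoc (v-1) h (u-1), p2, ← mul_assoc, ← mul_assoc, ← sub_mul,
      key1 u v h1 h2, ← ha, neg_mul]
  rw [hc, hodd.neg_pow, neg_inj]
  -- now the main computation
  subst hm
  rw [L m, key2 u v h1 h2, ← mul_assoc, ha, key4 u v h1 h2 m]
  simp only [mul_assoc]
end

section
/- Let F be a field of characteristic p > 0 and G a group with a normal locally finite p-subgroup P such that every element of P has centralizer of finite index in every finitely generated subgroup of G. Then the kernel 𝔍(P) of the natural map FG → F[G/P] is a locally nilpotent ideal of FG. -/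
open MonoidAlgebra

section Helpers

variable {F : Type*} [Field F] {Q : Type*} [Group Q]

lemma commute_of_center (z : Q) (hz : z ∈ Subgroup.center Q)
    (x : MonoidAlgebra F Q) : Commute (of F Q z) x := by
  refine x.induction ?_ ?_
  · simp [Commute, SemiconjBy]
  · intro g b f _ _ ih
    have h1 : Commute (of F Q z) (MonoidAlgebra.single g b) := by
      unfold Commute SemiconjBy
      simp only [of_apply, MonoidAlgebra.single_mul_single, one_mul, mul_one]
      rw [Subgroup.mem_center_iff.mp hz g]
    exact h1.add_right ih

/-- The set of group elements `g` with `of g - 1 ∈ J` is a subgroup. -/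
def jSubgroup (J : Ideal (MonoidAlgebra F Q)) : Subgroup Q where
  carrier := {g | of F Q g - 1 ∈ J}
  one_mem' := by
    rw [Set.mem_setOf_eq, map_one, sub_self]
    exact J.zero_mem
  mul_mem' := by
    intro a b ha hb
    have h : of F Q (a * b) - 1 = of F Q a * (of F Q b - 1) + (of F Q a - 1) := by
      rw [map_mul]; noncomm_ring
    rw [Set.mem_setOf_eq, h]
    exact J.add_mem (J.mul_mem_left _ hb) ha
  inv_mem' := by
    intro a ha
    have h : of F Q a⁻¹ - 1 = -(of F Q a⁻¹ * (of F Q a - 1)) := by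
      rw [mul_sub, ← map_mul, inv_mul_cancel, map_one, mul_one, neg_sub]
    rw [Set.mem_setOf_eq, h]
    exact J.neg_mem (J.mul_mem_left _ ha)

lemma mem_jSubgroup {J : Ideal (MonoidAlgebra F Q)} {g : Q} (h : g ∈ jSubgroup J) :
    of F Q g - 1 ∈ J := h

lemma single_sub_single_mem (J : Ideal (MonoidAlgebra F Q)) (a a' : Q) (b : F)
    (h : of F Q (a'⁻¹ * a) - 1 ∈ J) :
    (MonoidAlgebra.single a b : MonoidAlgebra F Q) - MonoidAlgebra.single a' b ∈ J := by
  have key : (MonoidAlgebra.single a b : MonoidAlgebra F Q) - MonoidAlgebra.single a' b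
      = MonoidAlgebra.single a' b * (of F Q (a'⁻¹ * a) - 1) := by
    rw [mul_sub, mul_one, of_apply, MonoidAlgebra.single_mul_single, mul_inv_cancel_left,
      mul_one]
  rw [key]
  exact J.mul_mem_left _ h

/-- The coset-representative projection on the monoid algebra. -/
noncomputable def rho (K : Subgroup Q) (x : MonoidAlgebra F Q) : MonoidAlgebra F Q :=
  MonoidAlgebra.mapDomain (fun q => ((QuotientGroup.mk q : Q ⧸ K)).out) x

lemma rho_add (K : Subgroup Q) (x y : MonoidAlgebra F Q) :
    rho K (x + y) = rho K x + rho K y := MonoidAlgebra.mapDomain_add _ _ _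

lemma rho_single (K : Subgroup Q) (a : Q) (b : F) :
    rho K (MonoidAlgebra.single a b) =
      MonoidAlgebra.single ((QuotientGroup.mk a : Q ⧸ K)).out b := MonoidAlgebra.mapDomain_single

lemma rho_zero (K : Subgroup Q) : rho (F := F) K 0 = 0 := MonoidAlgebra.mapDomain_zero _

/-- Kernel inclusion: if all elements of `K` map into `J` via `of · - 1`, then
`x - rho K x ∈ J`. -/
lemma sub_rho_mem (K : Subgroup Q) (J : Ideal (MonoidAlgebra F Q))
    (hK : ∀ k ∈ K, of F Q k - 1 ∈ J) (x : MonoidAlgebra F Q) :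
    x - rho K x ∈ J := by
  induction x using MonoidAlgebra.induction with
  | zero => rw [rho_zero, sub_zero]; exact J.zero_mem
  | single_add a b f haf hb ih =>
    rw [rho_add, add_sub_add_comm]
    refine J.add_mem ?_ ih
    rw [rho_single]
    refine single_sub_single_mem J _ _ _ (hK _ ?_)
    have h2 : (QuotientGroup.mk ((QuotientGroup.mk a : Q ⧸ K)).out : Q ⧸ K)
        = QuotientGroup.mk a := QuotientGroup.out_eq' _
    exact QuotientGroup.eq.mp h2

end Helpers

universe u v

theorem aug_nilpotent (F : Type v) [Field F] (p : ℕ) [hp : Fact p.Prime] [CharP F p] :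
    ∀ (n : ℕ) (Q : Type u) [Group Q] [Finite Q], Nat.card Q = n → IsPGroup p Q →
      ∃ m : ℕ, 0 < m ∧ ∀ f : Fin m → Q,
        (List.ofFn fun i => (of F Q (f i) - 1)).prod = 0 := by
  intro n
  induction n using Nat.strong_induction_on with
  | _ n ih =>
    intro Q _ _ hcard hpg
    by_cases hQ : Subsingleton Q
    · refine ⟨1, one_pos, fun f => ?_⟩
      have h0 : f 0 = 1 := Subsingleton.elim _ _
      simp [List.ofFn_succ, h0, ← MonoidAlgebra.one_def]
    · haveI : Nontrivial Q := not_subsingleton_iff_nontrivial.mp hQ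
      haveI := hpg.center_nontrivial
      obtain ⟨⟨z, hz⟩, hz1⟩ := exists_ne (1 : Subgroup.center Q)
      have hzne : z ≠ 1 := by simpa [Subtype.ext_iff] using hz1
      obtain ⟨k, hk⟩ := hpg z
      haveI : CharP (MonoidAlgebra F Q) p := charP_of_injective_algebraMap' F p
      have hnil : (of F Q z - 1) ^ p ^ k = 0 := by
        rw [sub_pow_char_pow_of_commute, ← map_pow, hk, map_one, one_pow, sub_self]
        exact Commute.one_right _
      set K := Subgroup.zpowers z with hK
      haveI : K.Normal := by
        constructor
        intro x hx g
        have hxc : x ∈ Subgroup.center Q := (Subgroup.zpowers_le.mpr hz) hx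
        have hgx : g * x * g⁻¹ = x := by
          rw [Subgroup.mem_center_iff.mp hxc g, mul_inv_cancel_right]
        rw [hgx]; exact hx
      have hcardK : 1 < Nat.card K := K.one_lt_card_iff_ne_bot.mpr (by
        intro h
        have hzb : z ∈ (⊥ : Subgroup Q) := h ▸ Subgroup.mem_zpowers z
        exact hzne (Subgroup.mem_bot.mp hzb))
      have hqpos : 0 < Nat.card (Q ⧸ K) := Nat.card_pos
      have hlt : Nat.card (Q ⧸ K) < n := by
        rw [← hcard, Subgroup.card_eq_card_quotient_mul_card_subgroup K]
        exact (Nat.lt_mul_iff_one_lt_right hqpos).mpr hcardK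
      obtain ⟨m', hm'pos, hm'⟩ := ih _ hlt (Q ⧸ K) rfl (hpg.to_quotient K)
      set J := Ideal.span {of F Q z - 1} with hJ
      have hzJ : of F Q z - 1 ∈ J := Ideal.subset_span rfl
      have hKJ : ∀ x ∈ K, of F Q x - 1 ∈ J := fun x hx =>
        mem_jSubgroup ((Subgroup.zpowers_le.mpr (show z ∈ jSubgroup J from hzJ)) hx)
      have hcomm : ∀ x : MonoidAlgebra F Q, Commute (of F Q z - 1) x := fun x =>
        (commute_of_center z hz x).sub_left (Commute.one_left x)
      -- every product of `m'` augmentation generators lies in `J`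
      have hblockJ : ∀ g : Fin m' → Q,
          (List.ofFn fun i => of F Q (g i) - 1).prod ∈ J := by
        intro g
        set w := (List.ofFn fun i => of F Q (g i) - 1).prod with hw
        have hπ : MonoidAlgebra.mapDomainRingHom F (QuotientGroup.mk' K) w = 0 := by
          rw [hw, map_list_prod, List.map_ofFn]
          have happ : ∀ q : Q, (MonoidAlgebra.mapDomainRingHom F (QuotientGroup.mk' K))
              (of F Q q - 1) = of F (Q ⧸ K) (QuotientGroup.mk q) - 1 := by
            intro q
            rw [map_sub, map_one]
            congr 1
            show MonoidAlgebra.mapDomain (⇑(QuotientGroup.mk' K)) (MonoidAlgebra.single q (1 : F))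
              = of F (Q ⧸ K) (QuotientGroup.mk q)
            rw [MonoidAlgebra.mapDomain_single]
            rfl
          have heq : (MonoidAlgebra.mapDomainRingHom F (QuotientGroup.mk' K)) ∘
                (fun i => of F Q (g i) - 1)
              = fun i : Fin m' => of F (Q ⧸ K) (QuotientGroup.mk (g i)) - 1 := by
            funext i
            simp only [Function.comp_apply]
            exact happ _
          rw [heq]
          exact hm' _
        have h1 := sub_rho_mem K J hKJ w
        have h2 : rho K w = 0 := by
          unfold rho
          have hco : (fun q => ((QuotientGroup.mk q : Q ⧸ K)).out)
              = (fun c : Q ⧸ K => c.out) ∘ (QuotientGroup.mk (s := K)) := rfl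
          rw [hco]
          have hπ' : (MonoidAlgebra.mapDomain (QuotientGroup.mk (s := K)) w
              : MonoidAlgebra F (Q ⧸ K)) = 0 := hπ
          show MonoidAlgebra.ofCoeff (Finsupp.mapDomain _ w.coeff) = 0
          rw [Finsupp.mapDomain_comp]
          have h3 : Finsupp.mapDomain (QuotientGroup.mk (s := K)) w.coeff = 0 :=
            congrArg MonoidAlgebra.coeff hπ'
          rw [h3, Finsupp.mapDomain_zero]
          rfl
        rw [h2, sub_zero] at h1
        exact h1
      -- block accumulation
      have hblocks : ∀ (j : ℕ) (g : Fin (m' * j) → Q), ∃ y,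
          (List.ofFn fun i => of F Q (g i) - 1).prod = (of F Q z - 1) ^ j * y := by
        intro j
        induction j with
        | zero =>
          intro g
          refine ⟨1, ?_⟩
          have hnl : (List.ofFn fun i => of F Q (g i) - 1) = [] := by
            apply List.eq_nil_of_length_eq_zero; simp
          simp [hnl]
        | succ j ihj =>
          intro g
          obtain ⟨y₁, hy₁⟩ := ihj (fun i => g (Fin.castAdd m' i))
          obtain ⟨r, hr⟩ := Submodule.mem_span_singleton.mp
            (hblockJ (fun i => g (Fin.natAdd (m' * j) i)))
          have hof : (List.ofFn fun i : Fin (m' * (j + 1)) => of F Q (g i) - 1).prod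
              = (List.ofFn fun i : Fin (m' * j) => of F Q (g (Fin.castAdd m' i)) - 1).prod
                * (List.ofFn fun i : Fin m' => of F Q (g (Fin.natAdd (m' * j) i)) - 1).prod := by
            rw [← List.prod_append]
            exact congrArg List.prod List.ofFn_add
          refine ⟨y₁ * r, ?_⟩
          rw [hof, hy₁, ← hr, smul_eq_mul]
          have key : y₁ * (r * (of F Q z - 1)) = (of F Q z - 1) * (y₁ * r) := by
            rw [← (hcomm r).eq, ← mul_assoc, ← (hcomm y₁).eq, mul_assoc]
          rw [mul_assoc, key, ← mul_assoc, ← pow_succ]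
      refine ⟨m' * p ^ k, Nat.mul_pos hm'pos (pow_pos hp.out.pos k), fun f => ?_⟩
      obtain ⟨y, hy⟩ := hblocks (p ^ k) f
      rw [hy, hnil, zero_mul]

/-- Let `F` be a field of characteristic `p > 0` and `G` a group with a
normal locally finite `p`-subgroup `P` such that every element of `P` has centralizer of
finite index in every finitely generated subgroup of `G`.  Then the ideal `𝔍(P)` of `FG`
generated by `{h − 1 : h ∈ P}` (the kernel of `FG → F[G/P]`) is locally nilpotent: every
finite subset of `𝔍(P)` generates a nilpotent (non-unital) subalgebra, i.e. all products of
some fixed length `n` of elements of the subset vanish. -/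
theorem stmt_6 {F G : Type*} [Field F] [Group G] (p : ℕ) [Fact p.Prime] [CharP F p]
    (P : Subgroup G) [P.Normal] (hP : IsPGroup p P)
    (hlocfin : ∀ s : Finset G, (↑s : Set G) ⊆ (P : Set G) →
      Finite (Subgroup.closure (↑s : Set G)))
    (hcent : ∀ x ∈ P, ∀ H : Subgroup G, H.FG →
      ((Subgroup.centralizer {x}).subgroupOf H).FiniteIndex)
    (I : Ideal (MonoidAlgebra F G))
    (hI : I = Ideal.span {x | ∃ h ∈ P, x = MonoidAlgebra.of F G h - 1}) :
    ∀ s : Finset (MonoidAlgebra F G), (↑s : Set (MonoidAlgebra F G)) ⊆ (I : Set (MonoidAlgebra F G)) →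
      ∃ n : ℕ, 0 < n ∧ ∀ f : Fin n → MonoidAlgebra F G,
        (∀ i, f i ∈ s) → (List.ofFn f).prod = 0 := by
  classical
  intro s hs
  -- step 1: representations of the elements of `s`
  have hrep : ∀ x ∈ s, ∃ c : MonoidAlgebra F G →₀ MonoidAlgebra F G,
      ↑c.support ⊆ {x | ∃ h ∈ P, x = MonoidAlgebra.of F G h - 1} ∧
      (c.sum fun a r => r • a) = x := by
    intro x hx
    have hxI : x ∈ I := hs hx
    rw [hI] at hxI
    exact Submodule.mem_span_set.mp hxI
  choose c hc1 hc2 using hrep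
  have hsel : ∀ (x : MonoidAlgebra F G) (hx : x ∈ s) (a : MonoidAlgebra F G),
      a ∈ (c x hx).support → ∃ h, h ∈ P ∧ a = MonoidAlgebra.of F G h - 1 := by
    intro x hx a ha
    exact hc1 x hx ha
  choose th thP tha using hsel
  -- the index type of all "atoms"
  let ι := Σ x : {x // x ∈ s}, {a // a ∈ (c x.1 x.2).support}
  let tval : ι → G := fun q => th q.1.1 q.1.2 q.2.1 q.2.2
  let Tset : Set G := Set.range tval
  let suppSet : Set G := ⋃ q : ι, ((((c q.1.1 q.1.2) q.2.1).coeff.support : Finset G) : Set G)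
  let baseSet : Set G := Tset ∪ suppSet
  have hbasefin : baseSet.Finite :=
    (Set.finite_range tval).union (Set.finite_iUnion fun q => Finset.finite_toSet _)
  set H : Subgroup G := Subgroup.closure baseSet with hH
  have hHfg : H.FG := (Subgroup.fg_iff H).mpr ⟨baseSet, rfl, hbasefin⟩
  have hTH : ∀ q : ι, ∀ g ∈ ((c q.1.1 q.1.2) q.2.1).coeff.support, (g : G) ∈ H := by
    intro q g hg
    exact Subgroup.subset_closure (Or.inr (Set.mem_iUnion.mpr ⟨q, hg⟩))
  -- step 2: finite conjugacy classes under H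
  have hfinCl : ∀ t ∈ P, (Set.range fun h : H => (h : G) * t * (h : G)⁻¹).Finite := by
    intro t ht
    haveI := hcent t ht H hHfg
    set C' := (Subgroup.centralizer {t}).subgroupOf H with hC'
    haveI : Finite (H ⧸ C') := Subgroup.finite_quotient_of_finiteIndex (H := C')
    have hfac : ∀ h : H, (h : G) * t * (h : G)⁻¹
        = (((QuotientGroup.mk h : H ⧸ C')).out : G) * t * (((QuotientGroup.mk h : H ⧸ C')).out : G)⁻¹ := by
      intro h
      obtain ⟨k, hk⟩ := QuotientGroup.mk_out_eq_mul C' h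
      have hkc : (k : H) ∈ C' := k.2
      have hkcent : ((k : H) : G) ∈ Subgroup.centralizer {t} := hkc
      have hcomm : t * ((k : H) : G) = ((k : H) : G) * t :=
        Subgroup.mem_centralizer_iff.mp hkcent t rfl
      rw [hk]
      push_cast
      rw [mul_inv_rev]
      calc (h : G) * t * (h : G)⁻¹
          = (h : G) * (((k : H) : G) * t * ((k : H) : G)⁻¹) * (h : G)⁻¹ := by
            rw [← hcomm]; group
        _ = (h : G) * ((k : H) : G) * t * (((k : H) : G)⁻¹ * (h : G)⁻¹) := by group
    have hsub : (Set.range fun h : H => (h : G) * t * (h : G)⁻¹)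
        ⊆ Set.range (fun q : H ⧸ C' => ((q.out : H) : G) * t * ((q.out : H) : G)⁻¹) := by
      rintro _ ⟨h, rfl⟩
      exact ⟨QuotientGroup.mk h, (hfac h).symm⟩
    exact (Set.finite_range _).subset hsub
  -- the set of conjugates
  have htvalP : ∀ q : ι, tval q ∈ P := fun q => thP q.1.1 q.1.2 q.2.1 q.2.2
  let Cset : Set G := ⋃ q : ι, Set.range fun h : H => (h : G) * tval q * (h : G)⁻¹
  have hCfin : Cset.Finite := Set.finite_iUnion fun q => hfinCl _ (htvalP q)
  have hCP : Cset ⊆ (P : Set G) := by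
    rintro _ hmem
    obtain ⟨q, hmemq⟩ := Set.mem_iUnion.mp hmem
    obtain ⟨h, rfl⟩ := hmemq
    exact Subgroup.Normal.conj_mem ‹P.Normal› _ (htvalP q) _
  set N : Subgroup G := Subgroup.closure Cset with hN
  haveI hNfin : Finite N := by
    have hcoe : ((hCfin.toFinset : Finset G) : Set G) = Cset := hCfin.coe_toFinset
    have := hlocfin hCfin.toFinset (by rw [hcoe]; exact hCP)
    rw [hcoe] at this
    exact this
  have hNP : N ≤ P := (Subgroup.closure_le P).mpr hCP
  have hNpg : IsPGroup p N := hP.to_le hNP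
  have hTN : ∀ q : ι, tval q ∈ N := by
    intro q
    apply Subgroup.subset_closure
    exact Set.mem_iUnion.mpr ⟨q, ⟨(1 : H), by simp⟩⟩
  -- H normalizes N
  have hnorm : ∀ g ∈ H, ∀ n ∈ N, g * n * g⁻¹ ∈ N := by
    intro g hg n hn
    have hmap : N.map (MulAut.conj g).toMonoidHom ≤ N := by
      rw [hN, MonoidHom.map_closure]
      apply Subgroup.closure_le _ |>.mpr
      rintro _ ⟨x, hx, rfl⟩
      obtain ⟨q, hq⟩ := Set.mem_iUnion.mp hx
      obtain ⟨h, rfl⟩ := hq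
      apply Subgroup.subset_closure
      refine Set.mem_iUnion.mpr ⟨q, ⟨⟨g, hg⟩ * h, ?_⟩⟩
      push_cast
      simp [MulAut.conj_apply]
      group
    exact hmap (Subgroup.mem_map.mpr ⟨n, hn, rfl⟩)
  -- step 3: nilpotency of the augmentation ideal of F[N]
  obtain ⟨m, hmpos, hm⟩ := aug_nilpotent F p (Nat.card ↥N) ↥N rfl hNpg
  have hprodN : ∀ (w : Fin m → G), (∀ i, w i ∈ N) →
      (List.ofFn fun i => MonoidAlgebra.of F G (w i) - 1).prod = 0 := by
    intro w hw
    have h0 := hm fun i => (⟨w i, hw i⟩ : N)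
    have h1 := congrArg (MonoidAlgebra.mapDomainRingHom F N.subtype) h0
    rw [map_zero, map_list_prod, List.map_ofFn] at h1
    have heq : (MonoidAlgebra.mapDomainRingHom F N.subtype) ∘
        (fun i : Fin m => MonoidAlgebra.of F (↥N) ⟨w i, hw i⟩ - 1)
        = fun i : Fin m => MonoidAlgebra.of F G (w i) - 1 := by
      funext i
      simp only [Function.comp_apply, map_sub, map_one]
      congr 1
      show MonoidAlgebra.mapDomain (⇑N.subtype) (MonoidAlgebra.single (⟨w i, hw i⟩ : N) (1 : F))
        = MonoidAlgebra.of F G (w i)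
      rw [MonoidAlgebra.mapDomain_single]
      rfl
    rw [heq] at h1
    exact h1
  -- step 4: the filtration
  let Mk : ℕ → Submodule F (MonoidAlgebra F G) := fun k => Submodule.span F
    {y | ∃ g ∈ H, ∃ w : Fin k → G, (∀ i, w i ∈ N) ∧
      y = MonoidAlgebra.of F G g * (List.ofFn fun i => MonoidAlgebra.of F G (w i) - 1).prod}
  have hMclosed : ∀ (k : ℕ) (g : G), g ∈ H → ∀ y ∈ Mk k,
      MonoidAlgebra.of F G g * y ∈ Mk k := by
    intro k g hg y hy
    have hmap : Submodule.map (LinearMap.mulLeft F (MonoidAlgebra.of F G g)) (Mk k) ≤ Mk k := by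
      rw [Submodule.map_span]
      apply Submodule.span_le.mpr
      rintro _ ⟨y', ⟨g', hg', w, hw, rfl⟩, rfl⟩
      apply Submodule.subset_span
      exact ⟨g * g', mul_mem hg hg', w, hw, by
        rw [LinearMap.mulLeft_apply, map_mul, mul_assoc]⟩
    exact hmap (Submodule.mem_map.mpr ⟨y, hy, rfl⟩)
  have hstep1 : ∀ (k : ℕ) (t : G), t ∈ N → ∀ y ∈ Mk k,
      (MonoidAlgebra.of F G t - 1) * y ∈ Mk (k + 1) := by
    intro k t ht y hy
    have hmap : Submodule.map (LinearMap.mulLeft F (MonoidAlgebra.of F G t - 1)) (Mk k)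
        ≤ Mk (k + 1) := by
      rw [Submodule.map_span]
      apply Submodule.span_le.mpr
      rintro _ ⟨y', ⟨g', hg', w, hw, rfl⟩, rfl⟩
      apply Submodule.subset_span
      have ht' : g'⁻¹ * t * g' ∈ N := by
        have := hnorm g'⁻¹ (inv_mem hg') t ht
        rwa [inv_inv] at this
      refine ⟨g', hg', Fin.cons (g'⁻¹ * t * g') w, ?_, ?_⟩
      · intro i
        refine Fin.cases ?_ ?_ i
        · exact ht'
        · intro j; simp only [Fin.cons_succ]; exact hw j
      · rw [LinearMap.mulLeft_apply]
        have hlist : (List.ofFn fun i : Fin (k + 1) =>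
            MonoidAlgebra.of F G ((Fin.cons (g'⁻¹ * t * g') w : Fin (k + 1) → G) i) - 1)
            = (MonoidAlgebra.of F G (g'⁻¹ * t * g') - 1)
              :: (List.ofFn fun i : Fin k => MonoidAlgebra.of F G (w i) - 1) := by
          rw [List.ofFn_succ]
          simp
        rw [hlist, List.prod_cons]
        have hgg : MonoidAlgebra.of F G t * MonoidAlgebra.of F G g'
            = MonoidAlgebra.of F G g' * MonoidAlgebra.of F G (g'⁻¹ * t * g') := by
          rw [← map_mul, ← map_mul]
          congr 1
          group
        set prod := (List.ofFn fun i : Fin k => MonoidAlgebra.of F G (w i) - 1).prod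
        calc (MonoidAlgebra.of F G t - 1) * (MonoidAlgebra.of F G g' * prod)
            = (MonoidAlgebra.of F G t * MonoidAlgebra.of F G g') * prod
              - MonoidAlgebra.of F G g' * prod := by noncomm_ring
          _ = (MonoidAlgebra.of F G g' * MonoidAlgebra.of F G (g'⁻¹ * t * g')) * prod
              - MonoidAlgebra.of F G g' * prod := by rw [hgg]
          _ = MonoidAlgebra.of F G g'
              * ((MonoidAlgebra.of F G (g'⁻¹ * t * g') - 1) * prod) := by noncomm_ring
    exact hmap (Submodule.mem_map.mpr ⟨y, hy, rfl⟩)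
  have hstep2 : ∀ (k : ℕ) (d : MonoidAlgebra F G), (↑d.coeff.support ⊆ (H : Set G)) →
      ∀ y ∈ Mk k, d * y ∈ Mk k := by
    intro k d hd y hy
    have hdy : d * y = d.coeff.sum fun g b => MonoidAlgebra.single g b * y := by
      rw [← Finsupp.sum_mul]
      congr 1
      exact (MonoidAlgebra.sum_coeff_single d).symm
    rw [hdy]
    apply Submodule.sum_mem
    intro g hg
    show MonoidAlgebra.single g (d.coeff g) * y ∈ Mk k
    have h1 : MonoidAlgebra.single g (d.coeff g) * y = (d.coeff g) • (MonoidAlgebra.of F G g * y) := by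
      have : MonoidAlgebra.single g (d.coeff g) = (d.coeff g) • MonoidAlgebra.of F G g := by
        rw [of_apply, MonoidAlgebra.smul_single, smul_eq_mul, mul_one]
      rw [this, smul_mul_assoc]
    rw [h1]
    exact Submodule.smul_mem _ _ (hMclosed k g (hd hg) y hy)
  have hstepx : ∀ (x : MonoidAlgebra F G) (hx : x ∈ s) (k : ℕ) (y : MonoidAlgebra F G),
      y ∈ Mk k → x * y ∈ Mk (k + 1) := by
    intro x hx k y hy
    have hxy : x * y = (c x hx).sum fun a r => r * (a * y) := by
      calc x * y = ((c x hx).sum fun a r => r • a) * y := by rw [hc2]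
        _ = (c x hx).sum fun a r => r * (a * y) := by
            rw [Finsupp.sum_mul]
            apply Finsupp.sum_congr
            intro a _
            rw [smul_eq_mul, mul_assoc]
    rw [hxy]
    apply Submodule.sum_mem
    intro a ha
    have haT : a = MonoidAlgebra.of F G (th x hx a ha) - 1 := tha x hx a ha
    have htN : th x hx a ha ∈ N := hTN ⟨⟨x, hx⟩, ⟨a, ha⟩⟩
    have h2 : a * y ∈ Mk (k + 1) := by
      rw [haT]
      exact hstep1 k _ htN y hy
    refine hstep2 (k + 1) (c x hx a) ?_ _ h2
    intro g hg
    exact hTH ⟨⟨x, hx⟩, ⟨a, ha⟩⟩ g hg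
  -- step 5: every product of `k` elements of `s` lies in `Mk k`
  have hprod : ∀ (k : ℕ) (f : Fin k → MonoidAlgebra F G), (∀ i, f i ∈ s) →
      (List.ofFn f).prod ∈ Mk k := by
    intro k
    induction k with
    | zero =>
      intro f _
      apply Submodule.subset_span
      refine ⟨1, one_mem H, fun i => i.elim0, fun i => i.elim0, ?_⟩
      simp [← MonoidAlgebra.one_def]
    | succ k ihk =>
      intro f hf
      rw [List.ofFn_succ, List.prod_cons]
      exact hstepx (f 0) (hf 0) k _ (ihk (fun i => f i.succ) fun i => hf i.succ)
  -- step 6: `Mk m = ⊥`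
  have hMbot : Mk m ≤ ⊥ := by
    apply Submodule.span_le.mpr
    rintro _ ⟨g, hg, w, hw, rfl⟩
    rw [SetLike.mem_coe, Submodule.mem_bot, hprodN w hw, mul_zero]
  refine ⟨m, hmpos, fun f hf => ?_⟩
  exact Submodule.mem_bot F |>.mp (hMbot (hprod m f hf))
end

section
/- Let F be a field of characteristic p > 2, G a group, and a, h ∈ G with a of order p. Set â = 1 + a + ⋯ + a^{p−1} ∈ FG. If â·h·â + â·h⁻¹·â = 0 in FG, then h normalizes ⟨a⟩ (i.e., h⁻¹⟨a⟩h = ⟨a⟩). -/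
open Finset Subgroup

private lemma aux1 {G : Type*} [Group G] (p : ℕ) (hp : p.Prime) (a h : G) (ha : orderOf a = p)
    (d e : ℤ) (hnd : ¬ (p:ℤ) ∣ d) (hc : h⁻¹ * a ^ d * h = a ^ e) :
    h ∈ Subgroup.normalizer (Subgroup.zpowers a : Set G) := by
  have hap : a ^ (p:ℤ) = 1 := by
    rw [zpow_natCast, ← ha, pow_orderOf_eq_one]
  have hco : IsCoprime ((p:ℤ)) d := (Nat.prime_iff_prime_int.mp hp).coprime_iff_not_dvd.mpr hnd
  obtain ⟨v, u, huv⟩ := hco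
  have kc : ∀ (x : G) (m : ℤ), h⁻¹ * x ^ m * h = (h⁻¹ * x * h) ^ m := by
    intro x m
    have := conj_zpow (i := m) (a := h⁻¹) (b := x)
    simpa using this.symm
  have h1 : a = a ^ (u*d) * a ^ (v*(p:ℤ)) := by
    rw [← zpow_add, (by linarith : u*d+v*(p:ℤ) = 1), zpow_one]
  have h2 : a ^ (v*(p:ℤ)) = 1 := by rw [mul_comm, zpow_mul, hap, one_zpow]
  have key : h⁻¹ * a * h = a ^ (e*u) := by
    calc h⁻¹*a*h = h⁻¹ * (a^(u*d) * a^(v*(p:ℤ))) * h := by rw [← h1]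
      _ = h⁻¹ * a^(d*u) * h := by rw [h2, mul_one, mul_comm u d]
      _ = (h⁻¹ * a^d * h)^u := by rw [zpow_mul, kc]
      _ = a^(e*u) := by rw [hc, ← zpow_mul]
  haveI : Finite ((Subgroup.zpowers a : Subgroup G) : Set G) := by
    have : IsOfFinOrder a := by
      rw [← orderOf_pos_iff, ha]; exact hp.pos
    exact this.finite_zpowers
  have hinv : h⁻¹ ∈ Subgroup.normalizer (Subgroup.zpowers a : Set G) := by
    apply Subgroup.mem_normalizer_fintype
    rintro n ⟨m, rfl⟩
    simp only [inv_inv]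
    have : h⁻¹ * a ^ m * h = a ^ (e*u*m) := by rw [kc, key, ← zpow_mul]
    exact this ▸ ⟨e*u*m, rfl⟩
  simpa using (Subgroup.normalizer (zpowers a : Set G)).inv_mem hinv

private lemma aux2 {G : Type*} [Group G] (p : ℕ) (hp : p.Prime) (a x : G) (ha : orderOf a = p)
    (i j k l : ℕ) (hi : i < p) (hk : k < p) (hik : i ≠ k)
    (hx : a^i * x * a^j = a^k * x * a^l) : x ∈ Subgroup.normalizer (Subgroup.zpowers a : Set G) := by
  have hx' : a ^ (i:ℤ) * x * a ^ (j:ℤ) = a ^ (k:ℤ) * x * a ^ (l:ℤ) := by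
    simpa [zpow_natCast] using hx
  have key : x⁻¹ * a ^ ((i:ℤ) - k) * x = a ^ ((l:ℤ) - j) := by
    calc x⁻¹ * a^((i:ℤ)-k) * x
        = x⁻¹ * a^(-(k:ℤ)) * (a^(i:ℤ) * x * a^(j:ℤ)) * a^(-(j:ℤ)) := by
          rw [zpow_sub]; group
      _ = x⁻¹ * a^(-(k:ℤ)) * (a^(k:ℤ) * x * a^(l:ℤ)) * a^(-(j:ℤ)) := by rw [hx']
      _ = a^((l:ℤ)-j) := by rw [zpow_sub]; group
  have hnd : ¬ (p:ℤ) ∣ ((i:ℤ) - k) := by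
    intro hdvd
    have habs : |(i:ℤ) - k| < (p:ℤ) := abs_lt.mpr ⟨by omega, by omega⟩
    have := Int.eq_zero_of_abs_lt_dvd hdvd habs
    omega
  exact aux1 p hp a x ha _ _ hnd key

/-- Let `F` be a field of characteristic `p > 2`, `G` a group and
`a, h ∈ G` with `a` of order `p`.  Set `â = 1 + a + ⋯ + a^(p−1) ∈ FG`.  If
`â·h·â + â·h⁻¹·â = 0` in `FG`, then `h` normalizes `⟨a⟩`. -/
theorem stmt_10 {F G : Type*} [Field F] [Group G] (p : ℕ) [Fact p.Prime] [CharP F p]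
    (hp : 2 < p) (a h : G) (ha : orderOf a = p)
    (heq :
      (∑ i ∈ Finset.range p, MonoidAlgebra.of F G a ^ i) * MonoidAlgebra.of F G h *
          (∑ i ∈ Finset.range p, MonoidAlgebra.of F G a ^ i) +
        (∑ i ∈ Finset.range p, MonoidAlgebra.of F G a ^ i) * MonoidAlgebra.of F G h⁻¹ *
          (∑ i ∈ Finset.range p, MonoidAlgebra.of F G a ^ i) = 0) :
    h ∈ Subgroup.normalizer (Subgroup.zpowers a : Set G) := by
  classical
  by_contra hn
  have hprime : p.Prime := Fact.out
  have hp0 : 0 < p := hprime.pos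
  -- expand the products
  have expand : ∀ g : G,
      (∑ i ∈ range p, MonoidAlgebra.of F G a ^ i) * MonoidAlgebra.of F G g *
        (∑ i ∈ range p, MonoidAlgebra.of F G a ^ i)
      = ∑ i ∈ range p, ∑ j ∈ range p, MonoidAlgebra.of F G (a^i * g * a^j) := by
    intro g
    rw [Finset.sum_mul, Finset.sum_mul]
    refine Finset.sum_congr rfl fun i _ => ?_
    rw [Finset.mul_sum]
    refine Finset.sum_congr rfl fun j _ => ?_
    rw [← map_pow, ← map_pow, ← map_mul, ← map_mul]
  rw [expand, expand] at heq
  -- evaluate at h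
  have heq' : (∑ i ∈ range p, ∑ j ∈ range p, Finsupp.single (a^i*h*a^j) (1:F))
      + (∑ i ∈ range p, ∑ j ∈ range p, Finsupp.single (a^i*h⁻¹*a^j) (1:F)) = (0 : G →₀ F) := by
    have := congrArg MonoidAlgebra.coeff heq
    simpa only [MonoidAlgebra.coeff_add, MonoidAlgebra.coeff_sum, MonoidAlgebra.of_apply,
      MonoidAlgebra.coeff_single, MonoidAlgebra.coeff_zero] using this
  have h1 := DFunLike.congr_fun heq' h
  simp only [Finsupp.add_apply, Finset.sum_apply', Finsupp.single_apply, Finsupp.coe_zero,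
    Pi.zero_apply] at h1
  have h0 : (∑ i ∈ range p, ∑ j ∈ range p, (if a^i * h * a^j = h then (1:F) else 0))
    + (∑ i ∈ range p, ∑ j ∈ range p, (if a^i * h⁻¹ * a^j = h then (1:F) else 0)) = 0 := h1
  -- injectivity facts
  have cancel : ∀ j l : ℕ, j < p → l < p → a^j = a^l → j = l := by
    intro j l hj hl e
    exact pow_injOn_Iio_orderOf (by rw [ha]; exact hj) (by rw [ha]; exact hl) e
  have fact1 : ∀ i < p, ∀ j < p, (a^i * h * a^j = h ↔ (i = 0 ∧ j = 0)) := by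
    intro i hi j hj
    constructor
    · intro hcond
      by_cases hik : i = 0
      · subst hik
        simp only [pow_zero, one_mul] at hcond
        have : a ^ j = 1 := by
          have h' : h * a ^ j = h * 1 := by simpa using hcond
          exact mul_left_cancel h'
        have hj0 : j = 0 := cancel j 0 hj hp0 (by simpa using this)
        exact ⟨rfl, hj0⟩
      · have : a^i * h * a^j = a^0 * h * a^0 := by simpa using hcond
        exact absurd (aux2 p hprime a h ha i j 0 0 hi hp0 hik this) hn
    · rintro ⟨rfl, rfl⟩; simp
  have fact2 : ∀ i < p, ∀ j < p, ∀ k < p, ∀ l < p,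
      a^i * h⁻¹ * a^j = h → a^k * h⁻¹ * a^l = h → i = k ∧ j = l := by
    intro i hi j hj k hk l hl e1 e2
    by_cases hik : i = k
    · subst hik
      refine ⟨rfl, ?_⟩
      have : a^i * h⁻¹ * a^j = a^i * h⁻¹ * a^l := e1.trans e2.symm
      have h'' : a^i * (h⁻¹ * a^j) = a^i * (h⁻¹ * a^l) := by simpa [mul_assoc] using this
      exact cancel j l hj hl (mul_left_cancel (mul_left_cancel h''))
    · have hmem : h⁻¹ ∈ Subgroup.normalizer (Subgroup.zpowers a : Set G) :=
        aux2 p hprime a h⁻¹ ha i j k l hi hk hik (e1.trans e2.symm)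
      exact absurd (by simpa using (Subgroup.normalizer (zpowers a : Set G)).inv_mem hmem) hn
  -- compute the first sum
  have s1 : (∑ i ∈ range p, ∑ j ∈ range p, (if a^i * h * a^j = h then (1:F) else 0)) = 1 := by
    have step : ∀ i ∈ range p,
        (∑ j ∈ range p, (if a^i * h * a^j = h then (1:F) else 0))
        = if i = 0 then 1 else 0 := by
      intro i hi
      rw [Finset.mem_range] at hi
      have : ∀ j ∈ range p, (if a^i * h * a^j = h then (1:F) else 0)
          = if (i = 0 ∧ j = 0) then (1:F) else 0 := by
        intro j hj
        rw [Finset.mem_range] at hj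
        exact if_congr (fact1 i hi j hj) rfl rfl
      rw [Finset.sum_congr rfl this]
      by_cases hi0 : i = 0 <;> simp [hi0, Finset.mem_range, hp0]
    rw [Finset.sum_congr rfl step]
    simp [Finset.mem_range, hp0]
  -- compute the second sum
  set c : F := ∑ i ∈ range p, ∑ j ∈ range p, (if a^i * h⁻¹ * a^j = h then (1:F) else 0) with hc
  have s2 : c = 0 ∨ c = 1 := by
    by_cases hex : ∃ i, i < p ∧ ∃ j, j < p ∧ a^i * h⁻¹ * a^j = h
    · obtain ⟨i0, hi0, j0, hj0, he0⟩ := hex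
      right
      have step : ∀ i ∈ range p,
          (∑ j ∈ range p, (if a^i * h⁻¹ * a^j = h then (1:F) else 0))
          = if i = i0 then 1 else 0 := by
        intro i hi
        rw [Finset.mem_range] at hi
        have : ∀ j ∈ range p, (if a^i * h⁻¹ * a^j = h then (1:F) else 0)
            = if (i = i0 ∧ j = j0) then (1:F) else 0 := by
          intro j hj
          rw [Finset.mem_range] at hj
          refine if_congr ⟨fun hcond => fact2 i hi j hj i0 hi0 j0 hj0 hcond he0, ?_⟩ rfl rfl
          rintro ⟨rfl, rfl⟩; exact he0
        rw [Finset.sum_congr rfl this]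
        by_cases hii : i = i0 <;> simp [hii, Finset.mem_range, hj0]
      rw [hc, Finset.sum_congr rfl step]
      simp [Finset.mem_range, hi0]
    · left
      push_neg at hex
      rw [hc]
      refine Finset.sum_eq_zero fun i hi => Finset.sum_eq_zero fun j hj => ?_
      rw [Finset.mem_range] at hi hj
      exact if_neg fun hcond => (hex i hi j hj) hcond
  -- conclude
  rw [s1] at h0
  rcases s2 with hc0 | hc1
  · rw [hc0, add_zero] at h0
    exact one_ne_zero h0
  · rw [hc1] at h0
    have h2 : ((2:ℕ) : F) = 0 := by push_cast; linear_combination h0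
    have := (CharP.cast_eq_zero_iff F p 2).mp h2
    have := Nat.le_of_dvd (by norm_num) this
    omega
end

section
/- Let F be a field and A = F⟨x₁,x₂⟩[[t]] the power series ring over the free algebra on two noncommuting variables. Then 1 + x₁t and 1 + x₂t are units of A, and the subgroup of U(A) they generate is a free group of rank 2 (Magnus' theorem). -/
set_option linter.unusedSectionVars false
set_option linter.unusedTactic false
set_option maxHeartbeats 1600000

namespace Magnus13

variable {α : Type*} [DecidableEq α]

def runs : List α → List (α × ℕ)
  | [] => []
  | a :: l => match runs l with
    | [] => [(a,1)]
    | (b,n) :: r => if a = b then (a,n+1) :: r else (a,1) :: (b,n) :: r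

lemma runs_cons (a : α) (l : List α) : runs (a :: l) = match runs l with
    | [] => [(a,1)]
    | (b,n) :: r => if a = b then (a,n+1) :: r else (a,1) :: (b,n) :: r := rfl

def wordOf (B : List (α × ℕ)) : List α := (B.map fun p => List.replicate p.2 p.1).flatten

@[simp] lemma wordOf_nil : wordOf ([] : List (α × ℕ)) = [] := rfl
@[simp] lemma wordOf_cons (p : α × ℕ) (B : List (α × ℕ)) :
    wordOf (p :: B) = List.replicate p.2 p.1 ++ wordOf B := rfl

lemma runs_cons_head (a : α) (l : List α) : ∃ n r, 0 < n ∧ runs (a :: l) = (a, n) :: r := by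
  rw [runs_cons]
  cases h : runs l with
  | nil => exact ⟨1, [], one_pos, rfl⟩
  | cons p r =>
    obtain ⟨b, n⟩ := p
    by_cases hab : a = b
    · subst hab; exact ⟨n+1, r, Nat.succ_pos n, by simp⟩
    · exact ⟨1, (b,n)::r, one_pos, by simp [hab]⟩

lemma runs_replicate_append (a : α) (w : List α) (hw : ∀ b ∈ w.head?, b ≠ a) :
    ∀ n, 0 < n → runs (List.replicate n a ++ w) = (a, n) :: runs w := by
  intro n hn
  induction n with
  | zero => omega
  | succ k ih =>
    rcases Nat.eq_zero_or_pos k with hk | hk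
    · subst hk
      simp only [List.replicate, List.singleton_append]
      cases w with
      | nil => simp [runs]
      | cons b w' =>
        have hba : b ≠ a := hw b rfl
        obtain ⟨m, r, hm, hr⟩ := runs_cons_head b w'
        rw [runs_cons, hr]
        simp [Ne.symm hba]
    · have h1 : List.replicate (k+1) a ++ w = a :: (List.replicate k a ++ w) := by
        simp [List.replicate_succ]
      rw [h1, runs_cons, ih hk]
      simp

lemma head?_wordOf (B : List (α × ℕ)) (hpos : ∀ p ∈ B, 0 < p.2) :
    (wordOf B).head? = B.head?.map Prod.fst := by
  cases B with
  | nil => rfl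
  | cons p B' =>
    obtain ⟨a, n⟩ := p
    have hn : 0 < n := hpos (a,n) (by simp)
    cases n with
    | zero => omega
    | succ k => simp [wordOf, List.replicate_succ]

lemma runs_wordOf (B : List (α × ℕ)) (hc : (B.map Prod.fst).Chain' (· ≠ ·))
    (hpos : ∀ p ∈ B, 0 < p.2) : runs (wordOf B) = B := by
  induction B with
  | nil => rfl
  | cons p B' ih =>
    obtain ⟨a, n⟩ := p
    have hn : 0 < n := hpos (a,n) (by simp)
    have hc' : (B'.map Prod.fst).Chain' (· ≠ ·) := (List.isChain_cons.mp hc).2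
    have hpos' : ∀ p ∈ B', 0 < p.2 := fun p hp => hpos p (by simp [hp])
    have hhead : ∀ b ∈ (wordOf B').head?, b ≠ a := by
      intro b hb
      rw [head?_wordOf B' hpos'] at hb
      cases B' with
      | nil => simp at hb
      | cons q B'' =>
        simp only [List.head?_cons, Option.map_some] at hb
        have h2 : a ≠ q.1 := (List.isChain_cons.mp hc).1 q.1 (by simp)
        simp only [Option.mem_some_iff] at hb
        subst hb
        exact Ne.symm h2
    rw [wordOf_cons, runs_replicate_append a _ hhead n hn, ih hc' hpos']

lemma length_runs_cons_le (a : α) (l : List α) :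
    (runs (a :: l)).length ≤ 1 + (runs l).length := by
  rw [runs_cons]
  cases h : runs l with
  | nil => simp
  | cons p r =>
    obtain ⟨b, n⟩ := p
    by_cases hab : a = b <;> simp [hab] <;> omega

lemma length_runs_replicate_append_le (a : α) (w : List α) :
    ∀ n, (runs (List.replicate n a ++ w)).length ≤ 1 + (runs w).length := by
  intro n
  induction n with
  | zero => simp
  | succ k ih =>
    rcases Nat.eq_zero_or_pos k with hk | hk
    · subst hk
      simpa using length_runs_cons_le a w
    · have h1 : List.replicate (k+1) a ++ w = a :: (List.replicate k a ++ w) := by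
        simp [List.replicate_succ]
      obtain ⟨c, rest, hc⟩ : ∃ c rest, List.replicate k a ++ w = c :: rest := by
        cases hk' : List.replicate k a ++ w with
        | nil => exfalso; have := congr_arg List.length hk'; simp at this; omega
        | cons c rest => exact ⟨c, rest, rfl⟩
      obtain ⟨m, r, hm, hr⟩ := runs_cons_head c rest
      rw [h1, runs_cons, hc, hr]
      by_cases hac : a = c
      · simp only [hac, if_pos rfl]
        have := ih
        rw [hc, hr] at this
        simpa using this
      · exfalso
        have hk1 : (List.replicate k a ++ w).head? = some a := by
          cases k with
          | zero => omega
          | succ k' => simp [List.replicate_succ]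
        rw [hc] at hk1
        simp at hk1
        exact hac hk1.symm

lemma length_runs_wordOf_le (B : List (α × ℕ)) :
    (runs (wordOf B)).length ≤ (B.filter (fun p => 0 < p.2)).length := by
  induction B with
  | nil => simp [runs]
  | cons p B' ih =>
    obtain ⟨a, n⟩ := p
    rcases Nat.eq_zero_or_pos n with hn | hn
    · subst hn
      simpa [wordOf] using ih
    · rw [wordOf_cons]
      calc (runs (List.replicate n a ++ wordOf B')).length
          ≤ 1 + (runs (wordOf B')).length := length_runs_replicate_append_le a _ n
        _ ≤ 1 + (B'.filter (fun p => 0 < p.2)).length := by omega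
        _ = (((a,n) :: B').filter (fun p => 0 < p.2)).length := by
            simp [List.filter_cons, hn]; omega

/-- Key combinatorial lemma: a word written with prescribed (chain-distinct) letters and
arbitrary multiplicities, equal to the word with all-positive multiplicities, forces equality. -/
lemma key (ℓ : List α) (hc : ℓ.Chain' (· ≠ ·)) (e m : List ℕ)
    (he : e.length = ℓ.length) (hm : m.length = ℓ.length) (hmpos : ∀ x ∈ m, 0 < x)
    (hw : wordOf (ℓ.zip e) = wordOf (ℓ.zip m)) : e = m := by
  have hmapm : (ℓ.zip m).map Prod.fst = ℓ := List.map_fst_zip hm.ge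
  have hmape : (ℓ.zip e).map Prod.fst = ℓ := List.map_fst_zip he.ge
  have hposm : ∀ p ∈ ℓ.zip m, 0 < p.2 := fun p hp => hmpos p.2 (List.of_mem_zip hp).2
  have hrm : runs (wordOf (ℓ.zip m)) = ℓ.zip m := runs_wordOf _ (by rw [hmapm]; exact hc) hposm
  have hlen : ((ℓ.zip e).filter (fun p => 0 < p.2)).length = (ℓ.zip e).length := by
    have h1 := length_runs_wordOf_le (ℓ.zip e)
    rw [hw, hrm] at h1
    have h2 : ((ℓ.zip e).filter (fun p => 0 < p.2)).length ≤ (ℓ.zip e).length :=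
      List.length_filter_le _ _
    have h3 : (ℓ.zip m).length = (ℓ.zip e).length := by
      rw [List.length_zip, List.length_zip, he, hm]
    omega
  have hpose : ∀ p ∈ ℓ.zip e, 0 < p.2 := by
    intro p hp
    have h4 := List.length_filter_eq_length_iff.mp hlen p hp
    simpa using h4
  have hre : runs (wordOf (ℓ.zip e)) = ℓ.zip e := runs_wordOf _ (by rw [hmape]; exact hc) hpose
  have hzz : ℓ.zip e = ℓ.zip m := by rw [← hre, ← hrm, hw]
  have : (ℓ.zip e).map Prod.snd = (ℓ.zip m).map Prod.snd := by rw [hzz]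
  rwa [List.map_snd_zip he.le, List.map_snd_zip hm.le] at this


variable {α : Type*} [DecidableEq α]

def eps (b : Bool) : ℤ := if b then 1 else -1

lemma eps_ne_zero (b : Bool) : eps b ≠ 0 := by cases b <;> simp [eps]

lemma eps_mul_self (b : Bool) : eps b * eps b = 1 := by cases b <;> simp [eps]

def blocks : List (α × Bool) → List (α × ℤ)
  | [] => []
  | (i,b) :: l => match blocks l with
    | [] => [(i, eps b)]
    | (j,k) :: r => if i = j then (i, k + eps b) :: r else (i, eps b) :: (j,k) :: r

lemma blocks_cons_nil {l : List (α × Bool)} (i : α) (b : Bool) (h : blocks l = []) :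
    blocks ((i,b) :: l) = [(i, eps b)] := by
  show (match blocks l with
    | [] => [(i, eps b)]
    | (j,k) :: r => if i = j then (i, k + eps b) :: r else (i, eps b) :: (j,k) :: r) = _
  rw [h]

lemma blocks_cons_cons {l : List (α × Bool)} (i : α) (b : Bool) {j : α} {k : ℤ}
    {r : List (α × ℤ)} (h : blocks l = (j,k) :: r) :
    blocks ((i,b) :: l) =
      if i = j then (i, k + eps b) :: r else (i, eps b) :: (j,k) :: r := by
  show (match blocks l with
    | [] => [(i, eps b)]
    | (j,k) :: r => if i = j then (i, k + eps b) :: r else (i, eps b) :: (j,k) :: r) = _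
  rw [h]

lemma prod_blocks {G : Type*} [Group G] (f : α → G) :
    ∀ L : List (α × Bool),
      ((blocks L).map fun p => f p.1 ^ p.2).prod = (L.map fun p => f p.1 ^ eps p.2).prod := by
  intro L
  induction L with
  | nil => rfl
  | cons p L' ih =>
    obtain ⟨i, b⟩ := p
    cases h : blocks L' with
    | nil =>
      rw [h] at ih
      simp only [List.map_nil, List.prod_nil] at ih
      rw [blocks_cons_nil i b h]
      simp [← ih]
    | cons q r =>
      obtain ⟨j, k⟩ := q
      rw [h] at ih
      rw [blocks_cons_cons i b h]
      by_cases hij : i = j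
      · subst hij
        rw [if_pos rfl]
        simp only [List.map_cons, List.prod_cons] at ih ⊢
        rw [← ih, ← mul_assoc, ← zpow_add, add_comm]
      · rw [if_neg hij]
        simp only [List.map_cons, List.prod_cons] at ih ⊢
        rw [← ih]

/-- Reducedness as a chain condition. -/
def Reduced (L : List (α × Bool)) : Prop :=
  List.Chain' (fun p q : α × Bool => p.1 = q.1 → p.2 = q.2) L

lemma reduced_of_no_split (L : List (α × Bool))
    (h : ∀ (L₂ L₃ : List (α × Bool)) (x : α) (b : Bool), L ≠ L₂ ++ (x,b) :: (x,!b) :: L₃) :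
    Reduced L := by
  induction L with
  | nil => exact List.isChain_nil
  | cons p t ih =>
    rw [Reduced]; unfold List.Chain'; rw [List.isChain_cons]
    constructor
    · intro q hq h1
      by_contra h2
      cases t with
      | nil => simp at hq
      | cons q' t' =>
        simp only [List.head?_cons, Option.mem_some_iff] at hq
        subst hq
        have hb : q'.2 = !p.2 := by
          revert h1 h2
          cases hp : p.2 <;> cases hq2 : q'.2 <;> simp
        refine h [] t' p.1 p.2 ?_
        have : q' = (p.1, !p.2) := Prod.ext h1.symm hb
        rw [this]
        rfl
    · exact ih (fun L₂ L₃ x b hx => h (p :: L₂) L₃ x b (by rw [hx]; rfl))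

lemma reduced_toWord (w : FreeGroup α) : Reduced w.toWord := by
  apply reduced_of_no_split
  intro L₂ L₃ x b hx
  exact FreeGroup.reduce.not (L₁ := w.toWord) (by rw [FreeGroup.reduce_toWord, hx])

def headOK : List (α × Bool) → List (α × ℤ) → Prop
  | [], [] => True
  | (i,b) :: _, (j,k) :: _ => i = j ∧ 0 < k * eps b
  | _, _ => False

lemma blocks_invariant (L : List (α × Bool)) (hL : Reduced L) :
    ((blocks L).map Prod.fst).Chain' (· ≠ ·) ∧ (∀ p ∈ blocks L, p.2 ≠ 0) ∧
      headOK L (blocks L) := by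
  induction L with
  | nil => exact ⟨List.isChain_nil, by simp [blocks], trivial⟩
  | cons p L' ih =>
    obtain ⟨i, b⟩ := p
    have hL' : Reduced L' := (List.isChain_cons.mp hL).2
    obtain ⟨ih1, ih2, ih3⟩ := ih hL'
    cases h : blocks L' with
    | nil =>
      rw [blocks_cons_nil i b h]
      refine ⟨by simp [List.Chain'], by simp [eps_ne_zero], ⟨rfl, ?_⟩⟩
      rw [eps_mul_self]; norm_num
    | cons q r =>
      obtain ⟨j, k⟩ := q
      rw [h] at ih1 ih2 ih3
      cases L' with
      | nil => simp [blocks] at h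
      | cons p' L'' =>
        obtain ⟨i', b'⟩ := p'
        obtain ⟨hij', hsign⟩ := ih3
        rw [blocks_cons_cons i b h]
        by_cases hij : i = j
        · subst hij
          rw [if_pos rfl]
          have hib : i = i' := hij' ▸ rfl
          have hbb : b' = b := by
            have := (List.isChain_cons.mp hL).1 (i', b') (by simp)
            exact (this (by rw [hib])).symm
          have hk : 0 < (k + eps b) * eps b := by
            have h1 : 0 < k * eps b := by rw [← hbb]; exact hsign
            have h2 := eps_mul_self b
            nlinarith
          refine ⟨by simpa using ih1, ?_, rfl, hk⟩
          intro p hp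
          rcases List.mem_cons.mp hp with rfl | hp
          · intro h0; simp only at h0; rw [h0] at hk; simp at hk
          · exact ih2 p (List.mem_cons_of_mem _ hp)
        · rw [if_neg hij]
          refine ⟨?_, ?_, rfl, ?_⟩
          · rw [List.map_cons]; unfold List.Chain'; rw [List.isChain_cons]
            refine ⟨?_, ih1⟩
            intro y hy; simp at hy; rw [← hy]; exact hij
          · intro p hp
            rcases List.mem_cons.mp hp with rfl | hp
            · exact eps_ne_zero b
            · exact ih2 p hp
          · rw [eps_mul_self]; norm_num

/-- The final packaging: every nontrivial element of the free group is a product over a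
nonempty block list with chain-distinct letters and nonzero exponents. -/
lemma exists_blocks {G : Type*} [Group G] (f : α → G) (w : FreeGroup α) (hw : w ≠ 1) :
    ∃ B : List (α × ℤ), B ≠ [] ∧ (B.map Prod.fst).Chain' (· ≠ ·) ∧ (∀ p ∈ B, p.2 ≠ 0) ∧
      FreeGroup.lift f w = ((B.map fun p => f p.1 ^ p.2)).prod := by
  obtain ⟨inv1, inv2, inv3⟩ := blocks_invariant w.toWord (reduced_toWord w)
  refine ⟨blocks w.toWord, ?_, inv1, inv2, ?_⟩
  · intro hB
    have hnil : w.toWord ≠ [] := fun hn => hw (FreeGroup.toWord_eq_nil_iff.mp hn)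
    cases hT : w.toWord with
    | nil => exact hnil hT
    | cons p t =>
      obtain ⟨i, b⟩ := p
      rw [hT] at inv3 hB
      rw [hB] at inv3
      exact inv3
  · rw [prod_blocks f w.toWord]
    conv_lhs => rw [← FreeGroup.mk_toWord (x := w)]
    rw [FreeGroup.lift_mk]
    congr 1
    apply List.map_congr_left
    intro p _
    cases hb : p.2 <;> simp [eps, hb]


open PowerSeries

variable {F : Type*} [Field F]

lemma coeff_one_add_pow_aux (c q : ℕ) (hc : 0 < c) :
    coeff (R := F) c ((1 + X ^ c) ^ q) = q := by
  rw [add_pow, map_sum]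
  have hterm : ∀ m ∈ Finset.range (q + 1),
      coeff c (1 ^ m * (X ^ c) ^ (q - m) * (q.choose m : F⟦X⟧)) =
        if q - m = 1 then (q.choose m : F) else 0 := by
    intro m _
    rw [one_pow, one_mul, ← pow_mul, ← map_natCast (PowerSeries.C) (q.choose m),
      mul_comm, coeff_C_mul, coeff_X_pow]
    have : c = c * (q - m) ↔ q - m = 1 := by
      constructor
      · intro h; nlinarith [Nat.le_of_eq h, hc]
      · intro h; rw [h, mul_one]
    by_cases h : q - m = 1
    · rw [if_pos (this.mpr h), if_pos h, mul_one]
    · rw [if_neg (fun hh => h (this.mp hh)), if_neg h, mul_zero]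
  rw [Finset.sum_congr rfl hterm]
  rcases Nat.eq_zero_or_pos q with hq | hq
  · subst hq; simp
  · rw [Finset.sum_eq_single (q - 1)]
    · rw [if_pos (by omega)]
      rw [Nat.choose_symm (by omega), Nat.choose_one_right]
    · intro m hm hne
      rw [Finset.mem_range] at hm
      rw [if_neg (by omega)]
    · intro h
      exfalso
      exact h (Finset.mem_range.mpr (by omega))


lemma charP_powerSeries (p : ℕ) [CharP F p] : CharP (PowerSeries F) p := by
  constructor
  intro n
  rw [← CharP.cast_eq_zero_iff F p n]
  constructor
  · intro h
    have := congrArg (PowerSeries.constantCoeff) h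
    simpa using this
  · intro h
    rw [← map_natCast (PowerSeries.C) n, h, map_zero]

lemma one_add_X_pow_ne_one (k : ℕ) (hk : k ≠ 0) : (1 + X : F⟦X⟧) ^ k ≠ 1 := by
  rcases CharP.char_is_prime_or_zero F (ringChar F) with hp | hp
  · -- positive characteristic p
    set p := ringChar F with hpdef
    haveI : Fact p.Prime := ⟨hp⟩
    haveI : CharP F p := ringChar.charP F
    haveI : CharP (PowerSeries F) p := charP_powerSeries p
    set s := k.factorization p with hs
    set q := k / p ^ s with hq
    have hk2 : p ^ s * q = k := Nat.ordProj_mul_ordCompl_eq_self k p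
    have hqnd : ¬ p ∣ q := Nat.not_dvd_ordCompl hp hk
    have hq0 : q ≠ 0 := by
      intro h; rw [h, mul_zero] at hk2; exact hk (hk2.symm)
    have hps : 0 < p ^ s := Nat.pow_pos hp.pos
    have hexp : (1 + X : F⟦X⟧) ^ k = (1 + X ^ p ^ s) ^ q := by
      rw [← hk2, pow_mul, add_pow_char_pow]
      rw [one_pow]
    intro hcon
    rw [hexp] at hcon
    have h1 := coeff_one_add_pow_aux (F := F) (p ^ s) q hps
    rw [hcon] at h1
    rw [PowerSeries.coeff_one, if_neg (by omega)] at h1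
    have : (q : F) = 0 := h1.symm
    rw [CharP.cast_eq_zero_iff F p q] at this
    exact hqnd this
  · -- characteristic zero
    haveI : CharP F 0 := hp ▸ ringChar.charP F
    intro hcon
    have h1 := coeff_one_add_pow_aux (F := F) 1 k one_pos
    rw [pow_one, hcon, PowerSeries.coeff_one, if_neg one_ne_zero] at h1
    have : (k : F) = 0 := h1.symm
    rw [CharP.cast_eq_zero_iff F 0 k] at this
    exact hk (by simpa using this)

/-- The unit `1 + X` of `F[[X]]`. -/
noncomputable def V : (PowerSeries F)ˣ :=
  (show IsUnit (1 + X : F⟦X⟧) from PowerSeries.isUnit_iff_constantCoeff.mpr (by simp)).unit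

@[simp] lemma V_val : ((V : (PowerSeries F)ˣ) : F⟦X⟧) = 1 + X := IsUnit.unit_spec _

/-- `1 + X` has infinite order as a unit. -/
lemma V_zpow_ne_one (k : ℤ) (hk : k ≠ 0) : (V : (PowerSeries F)ˣ) ^ k ≠ 1 := by
  have hpos : ∀ n : ℕ, n ≠ 0 → (V : (PowerSeries F)ˣ) ^ n ≠ 1 := by
    intro n hn hcon
    apply one_add_X_pow_ne_one (F := F) n hn
    have := congrArg (Units.val) hcon
    rw [Units.val_pow_eq_pow_val, V_val] at this
    simpa using this
  rcases lt_trichotomy k 0 with h | h | h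
  · intro hcon
    apply hpos (-k).toNat (by omega)
    rw [← zpow_natCast, Int.toNat_of_nonneg (by omega), zpow_neg, hcon, inv_one]
  · exact absurd h hk
  · intro hcon
    apply hpos k.toNat (by omega)
    rw [← zpow_natCast, Int.toNat_of_nonneg (by omega), hcon]

/-- Coefficients of integer powers of `1 + X`. -/
noncomputable def acoeff (k : ℤ) (n : ℕ) : F :=
  PowerSeries.coeff n (((V : (PowerSeries F)ˣ) ^ k : (PowerSeries F)ˣ) : F⟦X⟧)

@[simp] lemma acoeff_zero (k : ℤ) : (acoeff k 0 : F) = 1 := by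
  have : Units.map (PowerSeries.constantCoeff).toMonoidHom (V : (PowerSeries F)ˣ) = 1 := by
    ext
    simp [V_val]
  have h2 : Units.map (PowerSeries.constantCoeff).toMonoidHom
      ((V : (PowerSeries F)ˣ) ^ k) = 1 := by
    rw [map_zpow, this, one_zpow]
  have h3 := congrArg Units.val h2
  simp only [Units.coe_map, RingHom.toMonoidHom_eq_coe, MonoidHom.coe_coe, Units.val_one] at h3
  rw [acoeff, PowerSeries.coeff_zero_eq_constantCoeff]
  exact h3

lemma exists_acoeff_ne_zero (k : ℤ) (hk : k ≠ 0) :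
    ∃ n, 0 < n ∧ (acoeff k n : F) ≠ 0 := by
  by_contra hcon
  push_neg at hcon
  apply V_zpow_ne_one (F := F) k hk
  apply Units.ext
  rw [Units.val_one]
  ext n
  rcases Nat.eq_zero_or_pos n with h0 | h0
  · subst h0
    rw [show PowerSeries.coeff 0 ((((V : (PowerSeries F)ˣ) ^ k :
        (PowerSeries F)ˣ)) : F⟦X⟧) = acoeff k 0 from rfl, acoeff_zero]
    simp
  · rw [show PowerSeries.coeff n ((((V : (PowerSeries F)ˣ) ^ k :
        (PowerSeries F)ˣ)) : F⟦X⟧) = acoeff k n from rfl, hcon n h0]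
    rw [PowerSeries.coeff_one, if_neg (by omega)]

open Classical in
/-- The minimal positive index with nonzero coefficient. -/
noncomputable def mexp (k : ℤ) : ℕ :=
  if h : ∃ n, 0 < n ∧ (acoeff (F := F) k n : F) ≠ 0 then Nat.find h else 0

open Classical in
lemma mexp_spec (k : ℤ) (hk : k ≠ 0) :
    0 < mexp (F := F) k ∧ (acoeff k (mexp (F := F) k) : F) ≠ 0 ∧
      ∀ j, 0 < j → j < mexp (F := F) k → (acoeff k j : F) = 0 := by
  have h := exists_acoeff_ne_zero (F := F) k hk
  rw [mexp, dif_pos h]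
  obtain ⟨h1, h2⟩ := Nat.find_spec h
  refine ⟨h1, h2, ?_⟩
  intro j hj1 hj2
  by_contra hj3
  exact Nat.find_min h hj2 ⟨hj1, hj3⟩


open PowerSeries

variable {F : Type*} [Field F] {α : Type*} [DecidableEq α]

/-- underlying function of `Phi` -/
noncomputable def PhiFun (x : FreeAlgebra F α) (f : F⟦X⟧) : PowerSeries (FreeAlgebra F α) :=
  PowerSeries.mk fun n => PowerSeries.coeff n f • x ^ n

@[simp] lemma coeff_PhiFun (x : FreeAlgebra F α) (f : F⟦X⟧) (n : ℕ) :
    PowerSeries.coeff n (PhiFun x f) = PowerSeries.coeff n f • x ^ n :=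
  PowerSeries.coeff_mk _ _

noncomputable def Phi (x : FreeAlgebra F α) : F⟦X⟧ →+* PowerSeries (FreeAlgebra F α) where
  toFun f := PhiFun x f
  map_one' := by
    ext n
    rw [coeff_PhiFun, PowerSeries.coeff_one, PowerSeries.coeff_one]
    rcases Nat.eq_zero_or_pos n with h | h
    · subst h; simp
    · rw [if_neg (by omega), if_neg (by omega), zero_smul]
  map_mul' f g := by
    ext n
    rw [coeff_PhiFun, PowerSeries.coeff_mul, PowerSeries.coeff_mul, Finset.sum_smul]
    apply Finset.sum_congr rfl
    intro p hp
    rw [Finset.HasAntidiagonal.mem_antidiagonal] at hp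
    show _ = PowerSeries.coeff p.1 (PhiFun x f) * PowerSeries.coeff p.2 (PhiFun x g)
    rw [coeff_PhiFun, coeff_PhiFun, smul_mul_smul_comm, ← pow_add, hp]
  map_zero' := by
    ext n
    rw [coeff_PhiFun]
    simp
  map_add' f g := by
    ext n
    show PowerSeries.coeff n (PhiFun x (f + g)) =
      PowerSeries.coeff n (PhiFun x f) + PowerSeries.coeff n (PhiFun x g)
    rw [coeff_PhiFun, coeff_PhiFun, coeff_PhiFun, map_add, add_smul]

lemma coeff_Phi (x : FreeAlgebra F α) (f : F⟦X⟧) (n : ℕ) :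
    PowerSeries.coeff n (Phi x f) = PowerSeries.coeff n f • x ^ n :=
  coeff_PhiFun x f n

/-- The coefficient of the word `W` in an element of the free algebra. -/
noncomputable def cw (W : List α) (r : FreeAlgebra F α) : F :=
  (FreeAlgebra.equivMonoidAlgebraFreeMonoid r).coeff (FreeMonoid.ofList W)

lemma cw_add (W : List α) (r s : FreeAlgebra F α) : cw W (r + s) = cw W r + cw W s := by
  rw [cw, map_add]; rfl

lemma cw_smul (W : List α) (a : F) (r : FreeAlgebra F α) : cw W (a • r) = a * cw W r := by
  rw [cw, map_smul]
  rfl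

lemma cw_one (W : List α) : cw W (1 : FreeAlgebra F α) = if W = [] then 1 else 0 := by
  classical
  rw [cw, map_one]
  rw [MonoidAlgebra.one_def, MonoidAlgebra.coeff_single, Finsupp.single_apply]
  have : (1 : FreeMonoid α) = FreeMonoid.ofList W ↔ W = [] := by
    constructor
    · intro h
      have := congrArg FreeMonoid.toList h
      simpa using this.symm
    · intro h; subst h; rfl
  by_cases h : W = []
  · rw [if_pos (this.mpr h), if_pos h]
  · rw [if_neg (fun hh => h (this.mp hh)), if_neg h]

lemma equiv_iota_pow (i : α) (j : ℕ) :
    FreeAlgebra.equivMonoidAlgebraFreeMonoid ((FreeAlgebra.ι F i) ^ j) =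
      MonoidAlgebra.single (FreeMonoid.ofList (List.replicate j i)) 1 := by
  rw [map_pow]
  have h1 : FreeAlgebra.equivMonoidAlgebraFreeMonoid (FreeAlgebra.ι F i) =
      MonoidAlgebra.single (FreeMonoid.of i) 1 := by
    simp [FreeAlgebra.equivMonoidAlgebraFreeMonoid, MonoidAlgebra.of_apply]
  rw [h1, MonoidAlgebra.single_pow, one_pow]
  congr 1
  induction j with
  | zero => rfl
  | succ n ih => rw [pow_succ, ih, List.replicate_succ', FreeMonoid.ofList_append]; rfl

lemma cw_iota_pow_mul (i : α) (j : ℕ) (W : List α) (r : FreeAlgebra F α) :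
    cw (List.replicate j i ++ W) ((FreeAlgebra.ι F i) ^ j * r) = cw W r := by
  rw [cw, cw, map_mul, equiv_iota_pow]
  rw [FreeMonoid.ofList_append]
  rw [MonoidAlgebra.coeff_single_mul_eq_mul_coeff
    (x := FreeAlgebra.equivMonoidAlgebraFreeMonoid r)
    (m := FreeMonoid.ofList (List.replicate j i)) (m₂ := FreeMonoid.ofList W)
    (fun a _ => mul_left_cancel_iff), one_mul]

lemma cw_iota_pow_mul_eq_zero (i : α) (j : ℕ) (W : List α) (r : FreeAlgebra F α)
    (h : ¬ ∃ W', W = List.replicate j i ++ W') :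
    cw W ((FreeAlgebra.ι F i) ^ j * r) = 0 := by
  rw [cw, map_mul, equiv_iota_pow]
  apply MonoidAlgebra.single_mul_apply_of_not_exists_mul
  rintro ⟨d, hd⟩
  exact h ⟨FreeMonoid.toList d, congrArg FreeMonoid.toList hd⟩



section Main

variable {F : Type*} [Field F] {α : Type*} [DecidableEq α]

lemma cw_zero (W : List α) : cw W (0 : FreeAlgebra F α) = 0 := by
  rw [cw, map_zero]; rfl

lemma cw_sum {ι : Type*} (s : Finset ι) (f : ι → FreeAlgebra F α) (W : List α) :
    cw W (∑ x ∈ s, f x) = ∑ x ∈ s, cw W (f x) := by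
  classical
  induction s using Finset.induction with
  | empty => simp [cw_zero]
  | insert x s hx ih => rw [Finset.sum_insert hx, Finset.sum_insert hx, cw_add, ih]

/-- The series `(1 + x_i t)^k`. -/
noncomputable def SS (p : α × ℤ) : PowerSeries (FreeAlgebra F α) :=
  PhiFun (FreeAlgebra.ι F p.1) (((V ^ p.2 : (F⟦X⟧)ˣ)) : F⟦X⟧)

lemma coeff_SS (p : α × ℤ) (n : ℕ) :
    PowerSeries.coeff n (SS (F := F) p) = acoeff (F := F) p.2 n • (FreeAlgebra.ι F p.1) ^ n :=
  coeff_PhiFun _ _ _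

/-- Support lemma: every word occurring in the product comes from a composition. -/
lemma support_coeff (B : List (α × ℤ)) (N : ℕ) (W : List α)
    (h : cw W (PowerSeries.coeff N ((B.map (SS (F := F))).prod)) ≠ 0) :
    ∃ e : List ℕ, e.length = B.length ∧ e.sum = N ∧ W = wordOf ((B.map Prod.fst).zip e) := by
  induction B generalizing N W with
  | nil =>
    simp only [List.map_nil, List.prod_nil] at h
    rw [PowerSeries.coeff_one] at h
    rcases Nat.eq_zero_or_pos N with h0 | h0
    · subst h0
      rw [if_pos rfl, cw_one] at h
      refine ⟨[], rfl, rfl, ?_⟩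
      by_cases hW : W = []
      · simp [hW]
      · rw [if_neg hW] at h; exact absurd rfl h
    · rw [if_neg (by omega), cw_zero] at h
      exact absurd rfl h
  | cons p B' ih =>
    obtain ⟨i, k⟩ := p
    rw [List.map_cons, List.prod_cons, PowerSeries.coeff_mul, cw_sum] at h
    obtain ⟨⟨p, q⟩, hmem, hne⟩ := Finset.exists_ne_zero_of_sum_ne_zero h
    rw [Finset.HasAntidiagonal.mem_antidiagonal] at hmem
    rw [coeff_SS, smul_mul_assoc, cw_smul] at hne
    have hc : cw W ((FreeAlgebra.ι F i) ^ p *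
        PowerSeries.coeff q ((B'.map (SS (F := F))).prod)) ≠ 0 := fun h0 => hne (by rw [h0, mul_zero])
    have hpre : ∃ W', W = List.replicate p i ++ W' := by
      by_contra hnp
      exact hc (cw_iota_pow_mul_eq_zero i p W _ hnp)
    obtain ⟨W', rfl⟩ := hpre
    rw [cw_iota_pow_mul] at hc
    obtain ⟨e, hlen, hsum, hW⟩ := ih q W' hc
    refine ⟨p :: e, by simp [hlen], by simp [hsum, hmem], ?_⟩
    simp only [List.map_cons, List.zip_cons_cons, wordOf_cons]
    rw [hW]

/-- Value lemma: the coefficient at the distinguished word is nonzero. -/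
lemma value_ne_zero (B : List (α × ℤ)) (hc : (B.map Prod.fst).Chain' (· ≠ ·))
    (hk : ∀ p ∈ B, p.2 ≠ 0) :
    cw (wordOf ((B.map Prod.fst).zip (B.map fun p => mexp (F := F) p.2)))
      (PowerSeries.coeff ((B.map fun p => mexp (F := F) p.2).sum)
        ((B.map (SS (F := F))).prod)) ≠ 0 := by
  induction B with
  | nil =>
    simp only [List.map_nil, List.prod_nil, List.zip_nil_right, List.sum_nil, wordOf_nil]
    rw [PowerSeries.coeff_one, if_pos rfl, cw_one, if_pos rfl]
    exact one_ne_zero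
  | cons pr B' ih =>
    obtain ⟨i, k⟩ := pr
    have hkne : k ≠ 0 := hk (i, k) (by simp)
    obtain ⟨hm1, hm2, hm3⟩ := mexp_spec (F := F) k hkne
    have hc' : (B'.map Prod.fst).Chain' (· ≠ ·) := (List.isChain_cons.mp hc).2
    have hk' : ∀ p ∈ B', p.2 ≠ 0 := fun p hp => hk p (List.mem_cons_of_mem _ hp)
    have ihv := ih hc' hk'
    set ℓ' := B'.map Prod.fst with hl'
    set M' := B'.map fun p => mexp (F := F) p.2 with hM'
    set W' := wordOf (ℓ'.zip M') with hW'
    set N' := M'.sum with hN'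
    set m₁ := mexp (F := F) k with hm1def
    have hM'pos : ∀ x ∈ M', 0 < x := by
      intro x hx
      rw [hM', List.mem_map] at hx
      obtain ⟨p, hp, rfl⟩ := hx
      exact (mexp_spec (F := F) p.2 (hk' p hp)).1
    have hheadW' : B' ≠ [] → ∃ j, W'.head? = some j ∧ i ≠ j := by
      intro hB'
      have hlen' : M'.length = ℓ'.length := by simp [hM', hl']
      have hzpos : ∀ p ∈ ℓ'.zip M', 0 < p.2 := fun p hp => hM'pos p.2 (List.of_mem_zip hp).2
      rw [hW', head?_wordOf _ hzpos]
      cases B' with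
      | nil => exact absurd rfl hB'
      | cons q B'' =>
        refine ⟨q.1, ?_, ?_⟩
        · simp [hl', hM']
        · exact (List.isChain_cons.mp hc).1 q.1 (by simp [hl'])
    -- the word and the coefficient index
    simp only [List.map_cons, List.zip_cons_cons, wordOf_cons, List.sum_cons, List.prod_cons]
    rw [← hl', ← hM', ← hW', ← hN', ← hm1def]
    rw [PowerSeries.coeff_mul, cw_sum]
    rw [Finset.sum_eq_single_of_mem (m₁, N') (by rw [Finset.HasAntidiagonal.mem_antidiagonal])]
    · rw [coeff_SS, smul_mul_assoc, cw_smul]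
      show acoeff (F := F) k m₁ * cw (List.replicate m₁ i ++ W') _ ≠ 0
      rw [cw_iota_pow_mul]
      exact mul_ne_zero hm2 ihv
    · rintro ⟨p, q⟩ hmem hne
      rw [Finset.HasAntidiagonal.mem_antidiagonal] at hmem
      rw [coeff_SS, smul_mul_assoc, cw_smul]
      show acoeff (F := F) k p * cw (List.replicate m₁ i ++ W') ((FreeAlgebra.ι F i) ^ p * _) = 0
      rcases lt_trichotomy p m₁ with hlt | heq | hgt
      · rcases Nat.eq_zero_or_pos p with hp0 | hp0
        · -- p = 0 : use the support lemma and the runs count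
          subst hp0
          have hq : q = m₁ + N' := by omega
          rw [pow_zero, one_mul]
          rcases eq_or_ne (cw (List.replicate m₁ i ++ W')
              (PowerSeries.coeff q ((B'.map (SS (F := F))).prod))) 0 with h0 | h0
          · rw [h0, mul_zero]
          · exfalso
            obtain ⟨e, hlen, hsum, hWe⟩ := support_coeff B' q _ h0
            cases hB' : B' with
            | nil =>
              subst hB'
              have hlenW := congrArg List.length hWe
              simp only [hW', hl', hM', List.map_nil, List.zip_nil_left, List.zip_nil_right,
                wordOf_nil, List.length_nil, List.length_append, List.length_replicate] at hlenW
              omega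
            | cons qq B'' =>
              -- runs count contradiction
              have hB'ne : B' ≠ [] := by rw [hB']; simp
              obtain ⟨j, hj1, hj2⟩ := hheadW' hB'ne
              have hrunsW : runs (List.replicate m₁ i ++ W') = (i, m₁) :: runs W' := by
                apply runs_replicate_append i W' ?_ m₁ hm1
                intro b hb
                rw [hj1] at hb
                simp only [Option.mem_some_iff] at hb
                subst hb
                exact fun hh => hj2 hh.symm
              have hrunsW' : runs W' = ℓ'.zip M' := by
                apply runs_wordOf
                · rw [List.map_fst_zip (by simp [hl', hM'])]
                  exact hc'
                · exact fun p hp => hM'pos p.2 (List.of_mem_zip hp).2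
              have hlb := length_runs_wordOf_le (ℓ'.zip e)
              rw [← hWe, hrunsW, hrunsW'] at hlb
              have h1 : (ℓ'.zip M').length = B'.length := by simp [hl', hM']
              have h2 : ((ℓ'.zip e).filter fun p => 0 < p.2).length ≤ (ℓ'.zip e).length :=
                List.length_filter_le _ _
              have h3 : (ℓ'.zip e).length ≤ B'.length := by simp [hl', hlen]
              simp only [List.length_cons] at hlb
              omega
        · -- 0 < p < m₁ : minimality
          rw [hm3 p hp0 hlt, zero_mul]
      · exfalso; apply hne; rw [heq]; have : q = N' := by omega
        rw [this]
      · -- p > m₁ : not a prefix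
        rw [cw_iota_pow_mul_eq_zero, mul_zero]
        rintro ⟨W'', hWpre⟩
        cases hB' : B' with
        | nil =>
          subst hB'
          simp only [hl', hM', hW', List.map_nil, List.zip_nil_right, wordOf_nil] at hWpre
          have := congrArg List.length hWpre
          simp only [List.length_append, List.length_replicate, List.length_nil] at this
          omega
        | cons qq B'' =>
          have hB'ne : B' ≠ [] := by rw [hB']; simp
          obtain ⟨j, hj1, hj2⟩ := hheadW' hB'ne
          have hget := congrArg (fun L => L[m₁]?) hWpre
          rw [List.getElem?_append_right (by simp)] at hget
          rw [List.getElem?_append_left (by simp; omega)] at hget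
          simp only [List.length_replicate, Nat.sub_self] at hget
          rw [List.getElem?_replicate] at hget
          rw [if_pos hgt] at hget
          rw [← List.head?_eq_getElem?] at hget
          rw [hj1] at hget
          exact hj2 (by injection hget with hji; exact hji.symm)

end Main

section Final

variable {F : Type*} [Field F]

lemma coeff_C_mul_X (a : FreeAlgebra F (Fin 2)) (n : ℕ) :
    PowerSeries.coeff n (PowerSeries.C a * PowerSeries.X) = if n = 1 then a else 0 := by
  rw [show (PowerSeries.X : PowerSeries (FreeAlgebra F (Fin 2))) = PowerSeries.X ^ 1 from
    (pow_one _).symm]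
  exact PowerSeries.coeff_C_mul_X_pow a 1 n

lemma Phi_V_val (i : Fin 2) :
    Phi (FreeAlgebra.ι F i) (((V : (F⟦X⟧)ˣ)) : F⟦X⟧) =
      1 + PowerSeries.C (FreeAlgebra.ι F i) * PowerSeries.X := by
  rw [V_val]
  ext n
  rw [coeff_Phi, map_add, map_add, PowerSeries.coeff_one, PowerSeries.coeff_one,
    PowerSeries.coeff_X, coeff_C_mul_X]
  rcases eq_or_ne n 0 with rfl | h0
  · simp
  rcases eq_or_ne n 1 with rfl | h1
  · simp
  rw [if_neg h0, if_neg h0, if_neg h1, if_neg h1]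
  simp

/-- The unit `1 + x_i t`. -/
noncomputable def uU (i : Fin 2) : (PowerSeries (FreeAlgebra F (Fin 2)))ˣ :=
  Units.map (Phi (FreeAlgebra.ι F i)).toMonoidHom V

lemma uU_val (i : Fin 2) : ((uU i : (PowerSeries (FreeAlgebra F (Fin 2)))ˣ) :
    PowerSeries (FreeAlgebra F (Fin 2))) =
      1 + PowerSeries.C (FreeAlgebra.ι F i) * PowerSeries.X := by
  rw [uU, Units.coe_map]
  exact Phi_V_val i

lemma main_injective (u : Fin 2 → (PowerSeries (FreeAlgebra F (Fin 2)))ˣ)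
    (hu : ∀ i : Fin 2, (u i : PowerSeries (FreeAlgebra F (Fin 2))) =
      1 + PowerSeries.C (FreeAlgebra.ι F i) * PowerSeries.X)
    (w : FreeGroup (Fin 2)) (hlift : FreeGroup.lift u w = 1) : w = 1 := by
  by_contra hw
  obtain ⟨B, hBne, hchain, hknz, hprod⟩ := exists_blocks u w hw
  have huU : ∀ i, u i = uU (F := F) i := fun i => Units.ext (by rw [hu i, uU_val])
  have hval : ∀ p : Fin 2 × ℤ,
      ((u p.1 ^ p.2 : (PowerSeries (FreeAlgebra F (Fin 2)))ˣ) :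
        PowerSeries (FreeAlgebra F (Fin 2))) = SS (F := F) p := by
    intro p
    rw [huU, uU, ← map_zpow, Units.coe_map]
    rfl
  have h1 : ((B.map (SS (F := F))).prod) = 1 := by
    have h0 : ((B.map fun p => u p.1 ^ p.2).prod :
        (PowerSeries (FreeAlgebra F (Fin 2)))ˣ) = 1 := by rw [← hprod, hlift]
    have h2 := congrArg (Units.coeHom (PowerSeries (FreeAlgebra F (Fin 2)))) h0
    rw [map_one] at h2
    rw [show (Units.coeHom (PowerSeries (FreeAlgebra F (Fin 2))))
        ((B.map fun p => u p.1 ^ p.2).prod) =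
      ((B.map fun p => u p.1 ^ p.2).map (Units.coeHom _)).prod from
        map_list_prod (Units.coeHom _) _, List.map_map] at h2
    rw [← h2]
    congr 1
    apply List.map_congr_left
    intro p _
    exact (hval p).symm
  have h2 := value_ne_zero (F := F) B hchain hknz
  rw [h1] at h2
  apply h2
  have hNpos : 0 < (B.map fun p => mexp (F := F) p.2).sum := by
    cases B with
    | nil => exact absurd rfl hBne
    | cons p B' =>
      have := (mexp_spec (F := F) p.2 (hknz p (by simp))).1
      simp only [List.map_cons, List.sum_cons]
      omega
  rw [PowerSeries.coeff_one, if_neg (by omega), cw_zero]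

end Final

end Magnus13

/-- **Magnus' theorem.** In `A = F⟨x₁,x₂⟩[[t]]`, the elements `1 + x₁t` and
`1 + x₂t` are units, and the subgroup of `U(A)` they generate is free of rank 2: no
nontrivial word of the free group on two letters evaluates to `1` on them. -/
theorem stmt_13 {F : Type*} [Field F] :
    (∀ i : Fin 2,
      IsUnit ((1 : PowerSeries (FreeAlgebra F (Fin 2))) +
        PowerSeries.C (FreeAlgebra.ι F i) * PowerSeries.X)) ∧
    (∀ u : Fin 2 → (PowerSeries (FreeAlgebra F (Fin 2)))ˣ,
      (∀ i : Fin 2, (u i : PowerSeries (FreeAlgebra F (Fin 2))) =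
        1 + PowerSeries.C (FreeAlgebra.ι F i) * PowerSeries.X) →
      ∀ w : FreeGroup (Fin 2), FreeGroup.lift u w = 1 → w = 1) := by
  constructor
  · intro i
    exact ⟨Magnus13.uU i, Magnus13.uU_val i⟩
  · exact Magnus13.main_injective
end
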